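/- arXiv:math/0205194 — 14 statements merged into one kernel-verified Lean document; each statement's English description precedes it below -/
import Mathlib

section
/- The operation ⋊̃ defines a right action of the group X on the set X: for all x, y, y' ∈ X one has x ⋊̃ e = x and (x ⋊̃ y) ⋊̃ y' = x ⋊̃ (yy'). -/
/-- Closed form for `tact`: if `y⁻¹ * v⁻¹ = a * m` with `a ∈ G`, `m ∈ M`, then
`tact (v*t) y = a⁻¹ * (m * t * m⁻¹)`. -/
private lemma tact_closed_form
    {X : Type*} [Group X] [Fintype X] (G M : Subgroup X)
    (hbij : Function.Bijective (fun p : ↥G × ↥M => (p.1 : X) * (p.2 : X)))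
    (rho : ↥M → ↥G → ↥G) (sig : ↥M → ↥G → ↥M)
    (hfact : ∀ (s : ↥M) (u : ↥G), (s : X) * (u : X) = (rho s u : X) * (sig s u : X))
    (tact : X → X → X)
    (htact : ∀ (v u : ↥G) (t s : ↥M),
      tact ((v : X) * (t : X)) ((u : X) * (s : X)) =
        (rho (sig s⁻¹ (v * u)⁻¹) (v * u) : X) *
          ((sig s⁻¹ (v * u)⁻¹ : X) * (t : X) * (sig s⁻¹ (v * u)⁻¹ : X)⁻¹))
    (v : ↥G) (t : ↥M) (y : X) (a : ↥G) (m : ↥M)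
    (h : y⁻¹ * (v : X)⁻¹ = (a : X) * (m : X)) :
    tact ((v : X) * (t : X)) y = (a : X)⁻¹ * ((m : X) * (t : X) * (m : X)⁻¹) := by
  have inj : ∀ (g g' : ↥G) (n n' : ↥M), (g : X) * n = (g' : X) * n' → g = g' ∧ n = n' := by
    intro g g' n n' hh
    have := hbij.injective (a₁ := (g, n)) (a₂ := (g', n')) hh
    exact ⟨congrArg Prod.fst this, congrArg Prod.snd this⟩
  obtain ⟨⟨u, s⟩, hus⟩ := hbij.surjective y
  simp only at hus
  -- identify a and m
  have h1 : ((rho s⁻¹ (v * u)⁻¹ : ↥G) : X) * ((sig s⁻¹ (v * u)⁻¹ : ↥M) : X)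
      = (a : X) * (m : X) := by
    rw [← hfact, ← h, ← hus]
    push_cast
    group
  obtain ⟨ha, hm⟩ := inj _ _ _ _ h1
  -- identify rho m (v*u)
  have h2 : ((rho m (v * u) : ↥G) : X) * ((sig m (v * u) : ↥M) : X)
      = ((a⁻¹ : ↥G) : X) * ((s⁻¹ : ↥M) : X) := by
    rw [← hfact]
    have hm' : (m : X) = (a : X)⁻¹ * (y⁻¹ * (v : X)⁻¹) := by
      rw [h]; group
    rw [hm', ← hus]
    push_cast
    group
  obtain ⟨ha2, _⟩ := inj _ _ _ _ h2
  rw [← hus, htact v u t s, hm, ha2]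
  push_cast
  group

/-- **The operation `⋊̃` is a right action of `X` on itself.**
In an exact factorization `X = GM` with matched actions `rho = ▷`, `sig = ◁`,
define `(vt) ⋊̃ (us) = (s̃▷(vu)) * (s̃ * t * s̃⁻¹)` where `s̃ = s⁻¹◁(vu)⁻¹`.
Then `x ⋊̃ e = x` and `(x ⋊̃ y) ⋊̃ y' = x ⋊̃ (y*y')` for all `x, y, y' ∈ X`. -/
theorem tact_is_right_action
    {X : Type*} [Group X] [Fintype X] (G M : Subgroup X)
    (hbij : Function.Bijective (fun p : ↥G × ↥M => (p.1 : X) * (p.2 : X)))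
    (rho : ↥M → ↥G → ↥G) (sig : ↥M → ↥G → ↥M)
    (hfact : ∀ (s : ↥M) (u : ↥G), (s : X) * (u : X) = (rho s u : X) * (sig s u : X))
    (tact : X → X → X)
    (htact : ∀ (v u : ↥G) (t s : ↥M),
      tact ((v : X) * (t : X)) ((u : X) * (s : X)) =
        (rho (sig s⁻¹ (v * u)⁻¹) (v * u) : X) *
          ((sig s⁻¹ (v * u)⁻¹ : X) * (t : X) * (sig s⁻¹ (v * u)⁻¹ : X)⁻¹)) :
    ∀ x y y' : X, tact x 1 = x ∧ tact (tact x y) y' = tact x (y * y') := by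
  have key := tact_closed_form G M hbij rho sig hfact tact htact
  intro x y y'
  obtain ⟨⟨v, t⟩, hvt⟩ := hbij.surjective x
  simp only at hvt
  subst hvt
  constructor
  · have h0 : (1 : X)⁻¹ * (v : X)⁻¹ = ((v⁻¹ : ↥G) : X) * ((1 : ↥M) : X) := by
      push_cast; group
    rw [key v t 1 v⁻¹ 1 h0]
    push_cast
    group
  · obtain ⟨⟨a, m⟩, ham⟩ := hbij.surjective (y⁻¹ * (v : X)⁻¹)
    simp only at ham
    obtain ⟨⟨a', m'⟩, ham'⟩ := hbij.surjective (y'⁻¹ * (a : X))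
    simp only at ham'
    have e1 : tact ((v : X) * (t : X)) y = (a : X)⁻¹ * ((m : X) * (t : X) * (m : X)⁻¹) :=
      key v t y a m ham.symm
    have e2 : tact ((v : X) * (t : X)) (y * y')
        = ((a' : X))⁻¹ * (((m' * m : ↥M) : X) * (t : X) * ((m' * m : ↥M) : X)⁻¹) := by
      apply key v t (y * y') a' (m' * m)
      push_cast
      rw [mul_inv_rev, mul_assoc, ham.symm, ← mul_assoc, ← mul_assoc, ham'.symm]
    have e3 : tact ((a : X)⁻¹ * ((m : X) * (t : X) * (m : X)⁻¹)) y'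
        = ((a' : X))⁻¹ * (((m' : X)) * (((m * t * m⁻¹ : ↥M) : X)) * ((m' : X))⁻¹) := by
      have := key a⁻¹ (m * t * m⁻¹) y' a' m' (by push_cast; rw [inv_inv, ham'.symm])
      push_cast at this ⊢
      convert this using 2
    rw [e1, e3, e2]
    push_cast
    group
end

section
/- The map ‖·‖ intertwines the ⋊̃-action with conjugation: for all x, y ∈ X one has ‖x ⋊̃ y‖ = y⁻¹‖x‖y. -/
/-- **The grading map intertwines `⋊̃` with conjugation.**
In an exact factorization `X = GM`, with `‖vt‖ = v⁻¹t⁻¹v` (the map `norm`)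
and the operation `⋊̃` (the map `tact`) as in the paper, one has
`‖x ⋊̃ y‖ = y⁻¹ * ‖x‖ * y` for all `x, y ∈ X`. -/
theorem norm_intertwines_tact_with_conjugation
    {X : Type*} [Group X] [Fintype X] (G M : Subgroup X)
    (hbij : Function.Bijective (fun p : ↥G × ↥M => (p.1 : X) * (p.2 : X)))
    (rho : ↥M → ↥G → ↥G) (sig : ↥M → ↥G → ↥M)
    (hfact : ∀ (s : ↥M) (u : ↥G), (s : X) * (u : X) = (rho s u : X) * (sig s u : X))
    (norm : X → X)
    (hnorm : ∀ (v : ↥G) (t : ↥M), norm ((v : X) * (t : X)) = (v : X)⁻¹ * (t : X)⁻¹ * (v : X))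
    (tact : X → X → X)
    (htact : ∀ (v u : ↥G) (t s : ↥M),
      tact ((v : X) * (t : X)) ((u : X) * (s : X)) =
        (rho (sig s⁻¹ (v * u)⁻¹) (v * u) : X) *
          ((sig s⁻¹ (v * u)⁻¹ : X) * (t : X) * (sig s⁻¹ (v * u)⁻¹ : X)⁻¹)) :
    ∀ x y : X, norm (tact x y) = y⁻¹ * norm x * y := by
  intro x y
  obtain ⟨⟨v, t⟩, hx⟩ := hbij.2 x
  obtain ⟨⟨u, s⟩, hy⟩ := hbij.2 y
  simp only at hx hy
  subst hx; subst hy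
  set st : ↥M := sig s⁻¹ (v * u)⁻¹ with hst
  set r : ↥G := rho s⁻¹ (v * u)⁻¹ with hr
  set g : ↥G := rho st (v * u) with hg
  -- h1 : s⁻¹ (vu)⁻¹ = r * st  in X
  have h1 := hfact s⁻¹ (v * u)⁻¹
  rw [← hr, ← hst] at h1
  -- h2 : st * (vu) = g * sig st (vu)
  have h2 := hfact st (v * u)
  rw [← hg] at h2
  have hb : (st : X) = (r : X)⁻¹ * ((s : X)⁻¹ * (u : X)⁻¹ * (v : X)⁻¹) := by
    have h1' : (s : X)⁻¹ * ((v : X) * (u : X))⁻¹ = (r : X) * (st : X) := by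
      push_cast at h1; exact h1
    rw [eq_inv_mul_iff_mul_eq, ← h1']; group
  -- products equal, so g = r⁻¹
  have hprod : (g : X) * (sig st (v * u) : X) = ((r⁻¹ : ↥G) : X) * ((s⁻¹ : ↥M) : X) := by
    rw [← h2]
    push_cast
    rw [hb]; group
  have hpair : ((g, sig st (v * u)) : ↥G × ↥M) = (r⁻¹, s⁻¹) := hbij.1 hprod
  have hgr : (g : X) = (r : X)⁻¹ := by
    have := congrArg Prod.fst hpair
    simp only at this
    rw [this]; push_cast; rfl
  rw [htact, ← hst, ← hg]
  have hM : (st : X) * (t : X) * (st : X)⁻¹ = ((st * t * st⁻¹ : ↥M) : X) := by push_cast; rfl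
  rw [hM, hnorm g (st * t * st⁻¹), hnorm v t]
  push_cast
  rw [hgr, hb]
  group
end

section
/- The set Z = image(‖·‖) is stable under conjugation in X: for all z ∈ Z and y ∈ X one has y⁻¹zy ∈ Z. Moreover, for every z ∈ Z and y ∈ X the ⋊̃-action maps fibers to fibers, ‖·‖⁻¹(z) ⋊̃ y = ‖·‖⁻¹(y⁻¹zy); in particular the fiber ‖·‖⁻¹(z) is stable under the ⋊̃-action of the centralizer X_z of z in X. -/
/-- **The set `Z = image ‖·‖` is conjugation stable and fibers map to fibers.**
In an exact factorization `X = GM`, with `‖·‖ = norm` and `⋊̃ = tact` as in the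
paper: `Z = range norm` is stable under conjugation; `(‖·‖⁻¹(z)) ⋊̃ y = ‖·‖⁻¹(y⁻¹zy)`
for all `z ∈ Z`, `y ∈ X`; and each fiber `‖·‖⁻¹(z)` is stable under the `⋊̃`-action
of the centralizer of `z` in `X`. -/
theorem range_norm_conj_stable_and_fibers
    {X : Type*} [Group X] [Fintype X] (G M : Subgroup X)
    (hbij : Function.Bijective (fun p : ↥G × ↥M => (p.1 : X) * (p.2 : X)))
    (rho : ↥M → ↥G → ↥G) (sig : ↥M → ↥G → ↥M)
    (hfact : ∀ (s : ↥M) (u : ↥G), (s : X) * (u : X) = (rho s u : X) * (sig s u : X))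
    (norm : X → X)
    (hnorm : ∀ (v : ↥G) (t : ↥M), norm ((v : X) * (t : X)) = (v : X)⁻¹ * (t : X)⁻¹ * (v : X))
    (tact : X → X → X)
    (htact : ∀ (v u : ↥G) (t s : ↥M),
      tact ((v : X) * (t : X)) ((u : X) * (s : X)) =
        (rho (sig s⁻¹ (v * u)⁻¹) (v * u) : X) *
          ((sig s⁻¹ (v * u)⁻¹ : X) * (t : X) * (sig s⁻¹ (v * u)⁻¹ : X)⁻¹)) :
    (∀ z ∈ Set.range norm, ∀ y : X, y⁻¹ * z * y ∈ Set.range norm) ∧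
    (∀ z ∈ Set.range norm, ∀ y : X,
      (fun x => tact x y) '' (norm ⁻¹' {z}) = norm ⁻¹' {y⁻¹ * z * y}) ∧
    (∀ z ∈ Set.range norm, ∀ y ∈ Subgroup.centralizer {z},
      ∀ x ∈ norm ⁻¹' {z}, tact x y ∈ norm ⁻¹' {z}) := by
  obtain ⟨hinj, hsurj⟩ := hbij
  -- uniqueness of factorization
  have huniq : ∀ (g₁ g₂ : G) (m₁ m₂ : M), (g₁ : X) * m₁ = (g₂ : X) * m₂ →
      g₁ = g₂ ∧ m₁ = m₂ := by
    intro g₁ g₂ m₁ m₂ h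
    have h2 : ((g₁, m₁) : ↥G × ↥M) = (g₂, m₂) := hinj h
    exact ⟨congrArg Prod.fst h2, congrArg Prod.snd h2⟩
  -- decomposition
  have hdec : ∀ x : X, ∃ (v : G) (t : M), x = (v : X) * t := by
    intro x
    obtain ⟨⟨v, t⟩, h⟩ := hsurj x
    exact ⟨v, t, h.symm⟩
  -- key relations for rho/sig
  have hkey0 : ∀ (s : M) (w : G),
      rho (sig s⁻¹ w⁻¹) w = (rho s⁻¹ w⁻¹)⁻¹ ∧ sig (sig s⁻¹ w⁻¹) w = s⁻¹ := by
    intro s w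
    have e1 := hfact s⁻¹ w⁻¹
    have e2 := hfact (sig s⁻¹ w⁻¹) w
    have key : ((rho (sig s⁻¹ w⁻¹) w : G) : X) * ((sig (sig s⁻¹ w⁻¹) w : M) : X)
        = (((rho s⁻¹ w⁻¹)⁻¹ : G) : X) * ((s⁻¹ : M) : X) := by
      push_cast at e1 e2 ⊢
      rw [← e2]
      have hs : ((sig s⁻¹ w⁻¹ : M) : X) = ((rho s⁻¹ w⁻¹ : G) : X)⁻¹ * ((s : X)⁻¹ * (w : X)⁻¹) := by
        rw [e1]; group
      rw [hs]; group
    exact huniq _ _ _ _ key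
  have hkeyρ : ∀ (s : M) (w : G),
      ((rho (sig s⁻¹ w⁻¹) w : G) : X) = (sig s⁻¹ w⁻¹ : X) * (w : X) * (s : X) := by
    intro s w
    have e2 := hfact (sig s⁻¹ w⁻¹) w
    rw [(hkey0 s w).2] at e2
    push_cast at e2
    rw [e2]; group
  -- the fundamental compatibility: norm (tact x y) = y⁻¹ * norm x * y
  have hKEY : ∀ (v u : G) (t s : M),
      norm (tact ((v : X) * t) ((u : X) * s))
        = ((u : X) * s)⁻¹ * norm ((v : X) * t) * ((u : X) * s) := by
    intro v u t s
    rw [htact v u t s, hnorm v t]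
    have hco : (sig s⁻¹ (v * u)⁻¹ : X) * (t : X) * (sig s⁻¹ (v * u)⁻¹ : X)⁻¹
        = ((sig s⁻¹ (v * u)⁻¹ * t * (sig s⁻¹ (v * u)⁻¹)⁻¹ : M) : X) := by
      push_cast; group
    rw [hco, hnorm (rho (sig s⁻¹ (v * u)⁻¹) (v * u))
      (sig s⁻¹ (v * u)⁻¹ * t * (sig s⁻¹ (v * u)⁻¹)⁻¹), hkeyρ s (v * u)]
    push_cast
    group
  -- injectivity of rho m
  have hrho_inj : ∀ (m : M) (u₁ u₂ : G), rho m u₁ = rho m u₂ → u₁ = u₂ := by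
    intro m u₁ u₂ h
    have a1 : ((rho m u₁ : G) : X) = (m : X) * u₁ * ((sig m u₁ : M) : X)⁻¹ := by
      rw [hfact m u₁]; group
    have a2 : ((rho m u₂ : G) : X) = (m : X) * u₂ * ((sig m u₂ : M) : X)⁻¹ := by
      rw [hfact m u₂]; group
    have h3 : (u₁ : X) * (((sig m u₁)⁻¹ : M) : X) = (u₂ : X) * (((sig m u₂)⁻¹ : M) : X) := by
      push_cast
      have h5 : (m : X) * ((u₁ : X) * ((sig m u₁ : M) : X)⁻¹)
          = (m : X) * ((u₂ : X) * ((sig m u₂ : M) : X)⁻¹) := by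
        rw [← mul_assoc, ← mul_assoc, ← a1, ← a2, h]
      exact mul_left_cancel h5
    exact (huniq _ _ _ _ h3).1
  -- bijectivity of the action map
  have htact_bij : ∀ y : X, Function.Bijective (fun x => tact x y) := by
    intro y
    obtain ⟨u, s, rfl⟩ := hdec y
    refine Finite.injective_iff_bijective.mp ?_
    intro x₁ x₂ h
    obtain ⟨v₁, t₁, rfl⟩ := hdec x₁
    obtain ⟨v₂, t₂, rfl⟩ := hdec x₂
    simp only at h
    rw [htact v₁ u t₁ s, htact v₂ u t₂ s] at h
    have h' : ((rho (sig s⁻¹ (v₁ * u)⁻¹) (v₁ * u) : G) : X) *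
          ((sig s⁻¹ (v₁ * u)⁻¹ * t₁ * (sig s⁻¹ (v₁ * u)⁻¹)⁻¹ : M) : X)
        = ((rho (sig s⁻¹ (v₂ * u)⁻¹) (v₂ * u) : G) : X) *
          ((sig s⁻¹ (v₂ * u)⁻¹ * t₂ * (sig s⁻¹ (v₂ * u)⁻¹)⁻¹ : M) : X) := by
      push_cast
      rw [← mul_assoc, ← mul_assoc] at h ⊢
      exact h
    obtain ⟨hρ, hc⟩ := huniq _ _ _ _ h'
    rw [(hkey0 s (v₁ * u)).1, (hkey0 s (v₂ * u)).1] at hρ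
    have hv : v₁ = v₂ := by
      have := hrho_inj s⁻¹ (v₁ * u)⁻¹ (v₂ * u)⁻¹ (inv_injective hρ)
      have := inv_injective this
      exact mul_right_cancel this
    subst hv
    have ht : t₁ = t₂ := by
      have := mul_left_cancel (mul_right_cancel hc)
      exact this
    rw [ht]
  -- part 2 first
  have part2 : ∀ z ∈ Set.range norm, ∀ y : X,
      (fun x => tact x y) '' (norm ⁻¹' {z}) = norm ⁻¹' {y⁻¹ * z * y} := by
    intro z _ y
    ext w
    constructor
    · rintro ⟨x, hx, rfl⟩
      obtain ⟨v, t, rfl⟩ := hdec x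
      obtain ⟨u, s, rfl⟩ := hdec y
      simp only [Set.mem_preimage, Set.mem_singleton_iff] at hx ⊢
      rw [hKEY, hx]
    · intro hw
      obtain ⟨u, s, rfl⟩ := hdec y
      obtain ⟨x, hx⟩ := (htact_bij ((u : X) * s)).2 w
      simp only at hx
      obtain ⟨v, t, rfl⟩ := hdec x
      refine ⟨(v : X) * t, ?_, hx⟩
      simp only [Set.mem_preimage, Set.mem_singleton_iff] at hw ⊢
      have h2 : ((u : X) * s)⁻¹ * z * ((u : X) * s)
          = ((u : X) * s)⁻¹ * norm ((v : X) * t) * ((u : X) * s) := by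
        rw [← hw, ← hx, hKEY]
      exact (mul_left_cancel (mul_right_cancel h2)).symm
  refine ⟨?_, part2, ?_⟩
  · rintro z ⟨x, rfl⟩ y
    obtain ⟨v, t, rfl⟩ := hdec x
    obtain ⟨u, s, rfl⟩ := hdec y
    exact ⟨tact ((v : X) * t) ((u : X) * s), hKEY v u t s⟩
  · intro z hz y hy x hx
    have hzy : y⁻¹ * z * y = z := by
      have h := Subgroup.mem_centralizer_iff.mp hy z rfl
      rw [mul_assoc, h, ← mul_assoc, inv_mul_cancel, one_mul]
    have hm : tact x y ∈ (fun x => tact x y) '' (norm ⁻¹' {z}) := ⟨x, hx, rfl⟩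
    rw [part2 z hz y, hzy] at hm
    exact hm
end

section
/- For w = vt ∈ X (v ∈ G, t ∈ M) set ⟨w⟩ = t◁v ∈ M and |w| = (t▷v)⁻¹v ∈ G. Then the X-degree factorizes as ‖w‖ = ⟨w⟩⁻¹|w|; for all u ∈ G one has (vt) ⋊̃ u = (vu)t and ⟨w ⋊̃ u⟩ = ⟨w⟩◁u; and for all s ∈ M one has |w ⋊̃ s| = (s⁻¹▷|w|⁻¹)⁻¹. -/
/-- **Factorization of the `X`-degree into `M`- and `G`-degrees.**
For `w = vt ∈ X` (`v ∈ G`, `t ∈ M`) set `⟨w⟩ = t◁v ∈ M` (the map `Mdeg`) and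
`|w| = (t▷v)⁻¹v ∈ G` (the map `Gdeg`).  Then `‖w‖ = ⟨w⟩⁻¹|w|`; for `u ∈ G` one has
`(vt) ⋊̃ u = (vu)t` and `⟨w ⋊̃ u⟩ = ⟨w⟩◁u`; and for `s ∈ M` one has
`|w ⋊̃ s| = (s⁻¹▷|w|⁻¹)⁻¹`. -/
theorem degree_factorization
    {X : Type*} [Group X] [Fintype X] (G M : Subgroup X)
    (hbij : Function.Bijective (fun p : ↥G × ↥M => (p.1 : X) * (p.2 : X)))
    (rho : ↥M → ↥G → ↥G) (sig : ↥M → ↥G → ↥M)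
    (hfact : ∀ (s : ↥M) (u : ↥G), (s : X) * (u : X) = (rho s u : X) * (sig s u : X))
    (norm : X → X)
    (hnorm : ∀ (v : ↥G) (t : ↥M), norm ((v : X) * (t : X)) = (v : X)⁻¹ * (t : X)⁻¹ * (v : X))
    (tact : X → X → X)
    (htact : ∀ (v u : ↥G) (t s : ↥M),
      tact ((v : X) * (t : X)) ((u : X) * (s : X)) =
        (rho (sig s⁻¹ (v * u)⁻¹) (v * u) : X) *
          ((sig s⁻¹ (v * u)⁻¹ : X) * (t : X) * (sig s⁻¹ (v * u)⁻¹ : X)⁻¹))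
    (Mdeg : X → ↥M) (Gdeg : X → ↥G)
    (hMdeg : ∀ (v : ↥G) (t : ↥M), Mdeg ((v : X) * (t : X)) = sig t v)
    (hGdeg : ∀ (v : ↥G) (t : ↥M), Gdeg ((v : X) * (t : X)) = (rho t v)⁻¹ * v) :
    (∀ x : X, norm x = (Mdeg x : X)⁻¹ * (Gdeg x : X)) ∧
    (∀ (v u : ↥G) (t : ↥M), tact ((v : X) * (t : X)) (u : X) = ((v * u : ↥G) : X) * (t : X)) ∧
    (∀ (x : X) (u : ↥G), Mdeg (tact x (u : X)) = sig (Mdeg x) u) ∧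
    (∀ (x : X) (s : ↥M), Gdeg (tact x (s : X)) = (rho s⁻¹ (Gdeg x)⁻¹)⁻¹) := by
  -- uniqueness of factorization
  have uniq : ∀ (g1 g2 : ↥G) (m1 m2 : ↥M), (g1 : X) * m1 = (g2 : X) * m2 →
      g1 = g2 ∧ m1 = m2 := by
    intro g1 g2 m1 m2 h
    have h2 := hbij.1 (a₁ := (g1, m1)) (a₂ := (g2, m2)) h
    exact ⟨congrArg Prod.fst h2, congrArg Prod.snd h2⟩
  have rho_one : ∀ u : ↥G, rho 1 u = u := by
    intro u
    have h : ((u : ↥G) : X) * ((1 : ↥M) : X) = ((rho 1 u : ↥G) : X) * ((sig 1 u : ↥M) : X) := by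
      simpa using hfact 1 u
    exact ((uniq u (rho 1 u) 1 (sig 1 u) h).1).symm
  have sig_one : ∀ u : ↥G, sig 1 u = 1 := by
    intro u
    have h : ((u : ↥G) : X) * ((1 : ↥M) : X) = ((rho 1 u : ↥G) : X) * ((sig 1 u : ↥M) : X) := by
      simpa using hfact 1 u
    exact ((uniq u (rho 1 u) 1 (sig 1 u) h).2).symm
  have sig_one' : ∀ s : ↥M, sig s 1 = s := by
    intro s
    have h : ((1 : ↥G) : X) * ((s : ↥M) : X) = ((rho s 1 : ↥G) : X) * ((sig s 1 : ↥M) : X) := by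
      simpa using hfact s 1
    exact ((uniq 1 (rho s 1) s (sig s 1) h).2).symm
  -- matched pair identities
  have mulG : ∀ (s : ↥M) (u1 u2 : ↥G),
      rho s (u1 * u2) = rho s u1 * rho (sig s u1) u2 ∧
      sig s (u1 * u2) = sig (sig s u1) u2 := by
    intro s u1 u2
    have h : ((rho s (u1 * u2) : ↥G) : X) * ((sig s (u1 * u2) : ↥M) : X) =
        ((rho s u1 * rho (sig s u1) u2 : ↥G) : X) * ((sig (sig s u1) u2 : ↥M) : X) := by
      have e1 := hfact s (u1 * u2)
      have e2 := hfact s u1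
      have e3 := hfact (sig s u1) u2
      push_cast at e1 e2 e3 ⊢
      rw [← e1, ← mul_assoc, e2, mul_assoc, e3, ← mul_assoc]
    exact ⟨(uniq _ _ _ _ h).1, (uniq _ _ _ _ h).2⟩
  have mulM : ∀ (s1 s2 : ↥M) (u : ↥G),
      rho (s1 * s2) u = rho s1 (rho s2 u) ∧
      sig (s1 * s2) u = sig s1 (rho s2 u) * sig s2 u := by
    intro s1 s2 u
    have h : ((rho (s1 * s2) u : ↥G) : X) * ((sig (s1 * s2) u : ↥M) : X) =
        ((rho s1 (rho s2 u) : ↥G) : X) * ((sig s1 (rho s2 u) * sig s2 u : ↥M) : X) := by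
      have e1 := hfact (s1 * s2) u
      have e2 := hfact s2 u
      have e3 := hfact s1 (rho s2 u)
      push_cast at e1 e2 e3 ⊢
      rw [← e1, mul_assoc, e2, ← mul_assoc, e3, mul_assoc]
    exact ⟨(uniq _ _ _ _ h).1, (uniq _ _ _ _ h).2⟩
  have rho_inv : ∀ (s : ↥M) (u : ↥G), rho s⁻¹ (rho s u) = u := by
    intro s u
    have := (mulM s⁻¹ s u).1
    rw [inv_mul_cancel, rho_one] at this
    exact this.symm
  -- part 2
  have part2 : ∀ (v u : ↥G) (t : ↥M),
      tact ((v : X) * (t : X)) (u : X) = ((v * u : ↥G) : X) * (t : X) := by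
    intro v u t
    have h := htact v u t 1
    rw [inv_one, sig_one, rho_one] at h
    simpa using h
  refine ⟨?_, part2, ?_, ?_⟩
  · -- part 1
    intro x
    obtain ⟨⟨v, t⟩, rfl⟩ := hbij.2 x
    simp only [hnorm, hMdeg, hGdeg]
    have := hfact t v
    push_cast
    rw [show ((v : X)⁻¹ * (t : X)⁻¹) = ((rho t v : X) * (sig t v : X))⁻¹ by rw [← this]; group]
    group
  · -- part 3
    intro x u
    obtain ⟨⟨v, t⟩, rfl⟩ := hbij.2 x
    rw [part2 v u t, hMdeg, hMdeg, (mulG t v u).2]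
  · -- part 4
    intro x s
    obtain ⟨⟨v, t⟩, rfl⟩ := hbij.2 x
    have h := htact v 1 t s
    rw [mul_one] at h
    simp only [OneMemClass.coe_one, mul_one, one_mul] at h
    set st : ↥M := sig s⁻¹ v⁻¹ with hst
    have h' : tact ((v : X) * (t : X)) (s : X) =
        ((rho st v : ↥G) : X) * ((st * t * st⁻¹ : ↥M) : X) := by
      rw [h]; push_cast; rfl
    rw [h', hGdeg, hGdeg]
    have sig_st : sig st v = s⁻¹ := by
      have := (mulG s⁻¹ v⁻¹ v).2
      rw [inv_mul_cancel, sig_one', ← hst] at this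
      exact this.symm
    have e1 : rho (st * t * st⁻¹) (rho st v) = rho st (rho t v) := by
      rw [mul_assoc, (mulM st (t * st⁻¹) (rho st v)).1,
        (mulM t st⁻¹ (rho st v)).1, rho_inv]
    have e2 : rho st (rho t v) = rho st v * rho s⁻¹ (v⁻¹ * rho t v) := by
      have := (mulG st v (v⁻¹ * rho t v)).1
      rwa [mul_inv_cancel_left, sig_st] at this
    rw [e1, e2]
    simp [mul_inv_rev]
end

section
/- For each X-conjugacy class C contained in Z, the set ‖·‖⁻¹(C) is stable under the ⋊̃-action of every element of X. The group X is the disjoint union of the sets ‖·‖⁻¹(C) as C ranges over the X-conjugacy classes contained in Z; consequently k[X] = ⊕_C M_C, where M_C = span_k ‖·‖⁻¹(C), is a decomposition of k[X] into subspaces stable under the linearized right ⋊̃-action of X. -/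
/-- The linearization of the right action `⋊̃ y` on the group algebra `k[X] = X →₀ k`,
permuting the basis `X`. -/
noncomputable def linTact (k : Type*) [Field k] {X : Type*} (tact : X → X → X) (y : X) :
    (X →₀ k) →ₗ[k] (X →₀ k) :=
  Finsupp.lmapDomain k k (fun x => tact x y)

/-- **Decomposition of `k[X]` by conjugacy classes contained in `Z`.**
For each `X`-conjugacy class `C ⊆ Z = range ‖·‖`, the set `‖·‖⁻¹(C)` is stable
under the `⋊̃`-action of every element of `X`, `X` is the disjoint union of the
sets `‖·‖⁻¹(C)` over the conjugacy classes `C ⊆ Z`, and consequently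
`k[X] = ⊕_C M_C` with `M_C = span_k ‖·‖⁻¹(C)` a decomposition into subspaces
stable under the linearized right `⋊̃`-action of `X`. -/
theorem decomposition_by_conjugacy_classes
    {k X : Type*} [Field k] [Group X] [Fintype X] (G M : Subgroup X)
    (hbij : Function.Bijective (fun p : ↥G × ↥M => (p.1 : X) * (p.2 : X)))
    (rho : ↥M → ↥G → ↥G) (sig : ↥M → ↥G → ↥M)
    (hfact : ∀ (s : ↥M) (u : ↥G), (s : X) * (u : X) = (rho s u : X) * (sig s u : X))
    (norm : X → X)
    (hnorm : ∀ (v : ↥G) (t : ↥M), norm ((v : X) * (t : X)) = (v : X)⁻¹ * (t : X)⁻¹ * (v : X))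
    (tact : X → X → X)
    (htact : ∀ (v u : ↥G) (t s : ↥M),
      tact ((v : X) * (t : X)) ((u : X) * (s : X)) =
        (rho (sig s⁻¹ (v * u)⁻¹) (v * u) : X) *
          ((sig s⁻¹ (v * u)⁻¹ : X) * (t : X) * (sig s⁻¹ (v * u)⁻¹ : X)⁻¹))
    (MC : ConjClasses X → Submodule k (X →₀ k))
    (hMC : ∀ c : ConjClasses X,
      MC c = Submodule.span k ((fun x => Finsupp.single x (1 : k)) '' (norm ⁻¹' c.carrier))) :
    (∀ c : ConjClasses X, c.carrier ⊆ Set.range norm →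
      ∀ y : X, ∀ x ∈ norm ⁻¹' c.carrier, tact x y ∈ norm ⁻¹' c.carrier) ∧
    (⋃ c ∈ {c : ConjClasses X | c.carrier ⊆ Set.range norm}, norm ⁻¹' c.carrier
      = (Set.univ : Set X)) ∧
    (∀ c c' : ConjClasses X, c ≠ c' →
      Disjoint (norm ⁻¹' c.carrier) (norm ⁻¹' c'.carrier)) ∧
    (∀ c : ConjClasses X, c.carrier ⊆ Set.range norm →
      ∀ y : X, (MC c).map (linTact k tact y) ≤ MC c) ∧
    iSupIndep (fun c : {c : ConjClasses X // c.carrier ⊆ Set.range norm} => MC c) ∧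
    (⨆ c : {c : ConjClasses X // c.carrier ⊆ Set.range norm}, MC c = ⊤) := by
  classical
  -- every element factors as v * t with v ∈ G, t ∈ M
  have hsurj : ∀ x : X, ∃ (v : ↥G) (t : ↥M), x = (v : X) * (t : X) := by
    intro x
    obtain ⟨⟨v, t⟩, h⟩ := hbij.2 x
    exact ⟨v, t, h.symm⟩
  -- every element is in the preimage of its norm's class; norm x ∈ range norm trivially
  -- Z = range norm is closed under conjugation
  have hZconj : ∀ z ∈ Set.range norm, ∀ w : X, w * z * w⁻¹ ∈ Set.range norm := by
    rintro z ⟨x, rfl⟩ w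
    obtain ⟨v, t, rfl⟩ := hsurj x
    obtain ⟨u, s, husw⟩ := hsurj (w * (v : X)⁻¹)
    refine ⟨((u⁻¹ : ↥G) : X) * ((s * t * s⁻¹ : ↥M) : X), ?_⟩
    rw [hnorm u⁻¹ (s * t * s⁻¹), hnorm v t]
    have hw : w = (u : X) * (s : X) * (v : X) := by
      rw [← husw]; group
    rw [hw]
    push_cast
    group
  -- the norm of `tact x y` is conjugate to the norm of `x`
  have hstab : ∀ y x : X, IsConj (norm x) (norm (tact x y)) := by
    intro y x
    obtain ⟨v, t, rfl⟩ := hsurj x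
    obtain ⟨u, s, rfl⟩ := hsurj y
    rw [htact v u t s]
    set st : ↥M := sig s⁻¹ (v * u)⁻¹ with hst
    set g : ↥G := rho st (v * u) with hg
    have h2 : (g : X) * ((st : X) * (t : X) * (st : X)⁻¹)
        = (g : X) * ((st * t * st⁻¹ : ↥M) : X) := by
      push_cast; group
    rw [h2, hnorm g (st * t * st⁻¹), hnorm v t]
    rw [isConj_iff]
    refine ⟨(g : X)⁻¹ * (st : X) * (v : X), ?_⟩
    push_cast
    group
  have part1 : ∀ c : ConjClasses X,
      ∀ y : X, ∀ x ∈ norm ⁻¹' c.carrier, tact x y ∈ norm ⁻¹' c.carrier := by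
    intro c y x hx
    simp only [Set.mem_preimage, ConjClasses.mem_carrier_iff_mk_eq] at hx ⊢
    rw [← hx, ConjClasses.mk_eq_mk_iff_isConj]
    exact (hstab y x).symm
  have part2 : ∀ x : X, (ConjClasses.mk (norm x)).carrier ⊆ Set.range norm := by
    intro x a ha
    rw [ConjClasses.mem_carrier_iff_mk_eq, eq_comm, ConjClasses.mk_eq_mk_iff_isConj,
      isConj_iff] at ha
    obtain ⟨w, hw⟩ := ha
    rw [← hw]
    exact hZconj _ ⟨x, rfl⟩ w
  have part3 : ∀ c c' : ConjClasses X, c ≠ c' →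
      Disjoint (norm ⁻¹' c.carrier) (norm ⁻¹' c'.carrier) := by
    intro c c' hne
    rw [Set.disjoint_left]
    intro x hx hx'
    rw [Set.mem_preimage, ConjClasses.mem_carrier_iff_mk_eq] at hx hx'
    exact hne (hx ▸ hx')
  -- MC c as supported submodule
  have hMC' : ∀ c : ConjClasses X, MC c = Finsupp.supported k k (norm ⁻¹' c.carrier) := by
    intro c
    rw [hMC c, Finsupp.supported_eq_span_single]
  refine ⟨fun c _ => part1 c, ?_, part3, ?_, ?_, ?_⟩
  · -- the union covers X
    rw [Set.eq_univ_iff_forall]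
    intro x
    refine Set.mem_biUnion (part2 x) ?_
    exact Set.mem_preimage.2 ConjClasses.mem_carrier_mk
  · -- stability of MC c
    intro c _ y
    rw [hMC c, Submodule.map_span, Submodule.span_le]
    rintro _ ⟨_, ⟨x, hx, rfl⟩, rfl⟩
    have hlin : linTact k tact y (Finsupp.single x (1 : k))
        = Finsupp.single (tact x y) (1 : k) := by
      simp [linTact, Finsupp.mapDomain_single]
    rw [hlin]
    exact Submodule.subset_span ⟨tact x y, part1 c y x hx, rfl⟩
  · -- independence
    intro i
    show Disjoint (MC i.1)
      (⨆ (j : {c : ConjClasses X // c.carrier ⊆ Set.range norm}) (_ : j ≠ i), MC j.1)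
    rw [hMC' i]
    have hle : (⨆ (j : {c : ConjClasses X // c.carrier ⊆ Set.range norm}) (_ : j ≠ i), MC j)
        ≤ Finsupp.supported k k (⋃ (j : {c : ConjClasses X // c.carrier ⊆ Set.range norm})
            (_ : j ≠ i), norm ⁻¹' (j : ConjClasses X).carrier) := by
      refine iSup₂_le fun j hj => ?_
      rw [hMC' j]
      refine Finsupp.supported_mono (fun x hx => Set.mem_iUnion.2 ⟨j, Set.mem_iUnion.2 ⟨hj, hx⟩⟩)
    refine Disjoint.mono_right hle (Finsupp.disjoint_supported_supported ?_)
    rw [Set.disjoint_left]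
    intro x hx hx'
    simp only [Set.mem_iUnion] at hx'
    obtain ⟨j, hj, hxj⟩ := hx'
    exact (Set.disjoint_left.1 (part3 i j (fun h => hj (Subtype.ext h.symm))) hx) hxj
  · -- the sup is everything
    have : (⨆ c : {c : ConjClasses X // c.carrier ⊆ Set.range norm}, MC c)
        = ⨆ c : {c : ConjClasses X // c.carrier ⊆ Set.range norm},
            Finsupp.supported k k (norm ⁻¹' (c : ConjClasses X).carrier) :=
      iSup_congr fun c => hMC' c
    rw [this, ← Finsupp.supported_iUnion]
    have huniv : (⋃ c : {c : ConjClasses X // c.carrier ⊆ Set.range norm},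
        norm ⁻¹' (c : ConjClasses X).carrier) = Set.univ := by
      rw [Set.eq_univ_iff_forall]
      intro x
      exact Set.mem_iUnion.2 ⟨⟨ConjClasses.mk (norm x), part2 x⟩,
        Set.mem_preimage.2 ConjClasses.mem_carrier_mk⟩
    rw [huniv, Finsupp.supported_univ]
end

section
/- Let z₀ ∈ Z with X-conjugacy class C, and for each z ∈ C fix z̄ ∈ X with z = z̄⁻¹z₀z̄. Let J ⊆ J_{z₀} = span_k ‖·‖⁻¹(z₀) be a subspace stable under the linearized ⋊̃-action of the centralizer X_{z₀}. Then J ⋊̃ z̄ ⊆ J_z = span_k ‖·‖⁻¹(z) for each z ∈ C, the sum M_J = Σ_{z ∈ C} (J ⋊̃ z̄) is a direct sum, and M_J is a crossed submodule of k[X] (i.e. M_J is stable under the linearized ⋊̃-action of X and M_J = ⊕_{z ∈ Z} (M_J ∩ J_z)). -/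
/-- The homogeneous component `J_z = span_k ‖·‖⁻¹(z)` of `k[X]`. -/
noncomputable def Jsub (k : Type*) [Field k] {X : Type*} (norm : X → X) (z : X) :
    Submodule k (X →₀ k) :=
  Submodule.span k ((fun x => Finsupp.single x (1 : k)) '' (norm ⁻¹' {z}))

/-- A subspace `V ⊆ k[X]` is a crossed submodule if it is stable under the
linearized `⋊̃`-action of `X` and `V = ⊕_{z∈Z}(V ∩ J_z)`. -/
def IsCrossedSubmodule (k : Type*) [Field k] {X : Type*} (norm : X → X)
    (tact : X → X → X) (V : Submodule k (X →₀ k)) : Prop :=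
  (∀ y : X, V.map (linTact k tact y) ≤ V) ∧
  V = ⨆ z ∈ Set.range norm, V ⊓ Jsub k norm z

section Aux

variable {X : Type*} [Group X] {G M : Subgroup X}

/-- The key structural formula: if `x = v·t` with `v ∈ G`, `t ∈ M`, and
`(v·y)⁻¹ = g·m` with `g ∈ G`, `m ∈ M`, then `x ⋊̃ y = g⁻¹·(m t m⁻¹)`. -/
lemma tact_key
    (hbij : Function.Bijective (fun p : ↥G × ↥M => (p.1 : X) * (p.2 : X)))
    (rho : ↥M → ↥G → ↥G) (sig : ↥M → ↥G → ↥M)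
    (hfact : ∀ (s : ↥M) (u : ↥G), (s : X) * (u : X) = (rho s u : X) * (sig s u : X))
    (tact : X → X → X)
    (htact : ∀ (v u : ↥G) (t s : ↥M),
      tact ((v : X) * (t : X)) ((u : X) * (s : X)) =
        (rho (sig s⁻¹ (v * u)⁻¹) (v * u) : X) *
          ((sig s⁻¹ (v * u)⁻¹ : X) * (t : X) * (sig s⁻¹ (v * u)⁻¹ : X)⁻¹))
    (v : ↥G) (t : ↥M) (y : X) :
    ∃ (g : ↥G) (m : ↥M), (g : X) * (m : X) = ((v : X) * y)⁻¹ ∧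
      tact ((v : X) * (t : X)) y = (g : X)⁻¹ * (m : X) * (t : X) * (m : X)⁻¹ := by
  obtain ⟨⟨u, s⟩, rfl⟩ := hbij.surjective y
  refine ⟨rho s⁻¹ (v * u)⁻¹, sig s⁻¹ (v * u)⁻¹, ?_, ?_⟩
  · have h1 := hfact s⁻¹ (v * u)⁻¹
    push_cast at h1
    rw [← h1]; group
  · have h1 := hfact s⁻¹ (v * u)⁻¹
    have h4 := hfact (sig s⁻¹ (v * u)⁻¹) (v * u)
    push_cast at h1 h4
    have hm : ((sig s⁻¹ (v * u)⁻¹ : ↥M) : X)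
        = ((rho s⁻¹ (v * u)⁻¹ : ↥G) : X)⁻¹ * (((s : X))⁻¹ * ((v : X) * (u : X))⁻¹) := by
      rw [h1, inv_mul_cancel_left]
    have h6 : (((rho s⁻¹ (v * u)⁻¹)⁻¹ : ↥G), (s⁻¹ : ↥M))
        = (rho (sig s⁻¹ (v * u)⁻¹) (v * u), sig (sig s⁻¹ (v * u)⁻¹) (v * u)) := by
      apply hbij.injective
      show (((rho s⁻¹ (v * u)⁻¹)⁻¹ : ↥G) : X) * ((s⁻¹ : ↥M) : X)
          = ((rho (sig s⁻¹ (v * u)⁻¹) (v * u) : ↥G) : X) *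
            ((sig (sig s⁻¹ (v * u)⁻¹) (v * u) : ↥M) : X)
      push_cast
      rw [← h4, hm]; group
    have h9 : ((rho s⁻¹ (v * u)⁻¹)⁻¹ : ↥G) = rho (sig s⁻¹ (v * u)⁻¹) (v * u) :=
      congrArg Prod.fst h6
    have h7 := htact v u t s
    rw [h7, ← h9]
    push_cast
    group

lemma tact_assoc
    (hbij : Function.Bijective (fun p : ↥G × ↥M => (p.1 : X) * (p.2 : X)))
    (rho : ↥M → ↥G → ↥G) (sig : ↥M → ↥G → ↥M)
    (hfact : ∀ (s : ↥M) (u : ↥G), (s : X) * (u : X) = (rho s u : X) * (sig s u : X))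
    (tact : X → X → X)
    (htact : ∀ (v u : ↥G) (t s : ↥M),
      tact ((v : X) * (t : X)) ((u : X) * (s : X)) =
        (rho (sig s⁻¹ (v * u)⁻¹) (v * u) : X) *
          ((sig s⁻¹ (v * u)⁻¹ : X) * (t : X) * (sig s⁻¹ (v * u)⁻¹ : X)⁻¹))
    (x a b : X) : tact (tact x a) b = tact x (a * b) := by
  obtain ⟨⟨v, t⟩, rfl⟩ := hbij.surjective x
  obtain ⟨g, m, hgm, h1⟩ := tact_key hbij rho sig hfact tact htact v t a
  obtain ⟨g2, m2, hg2, h3⟩ := tact_key hbij rho sig hfact tact htact v t (a * b)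
  have h1' : tact ((v : X) * (t : X)) a = ((g⁻¹ : ↥G) : X) * ((m * t * m⁻¹ : ↥M) : X) := by
    rw [h1]; push_cast; group
  obtain ⟨g', m', hgm', h2⟩ := tact_key hbij rho sig hfact tact htact g⁻¹ (m * t * m⁻¹) b
  rw [h1', h2, h3]
  -- identify (ĝ, m̂) with (g', m' * m)
  have h6 : (g2, m2) = (g', m' * m) := by
    apply hbij.injective
    show (g2 : X) * (m2 : X) = (g' : X) * ((m' * m : ↥M) : X)
    rw [hg2]
    have hm : (m : X) = (g : X)⁻¹ * ((v : X) * a)⁻¹ := by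
      rw [← hgm]; group
    have hg' : (g' : X) = (((g⁻¹ : ↥G) : X) * b)⁻¹ * ((m' : X))⁻¹ := by
      rw [← hgm']; group
    push_cast at hg' ⊢
    rw [hg', hm]; group
  have h7 : g2 = g' := congrArg Prod.fst h6
  have h8 : m2 = m' * m := congrArg Prod.snd h6
  rw [h7, h8]
  push_cast
  group

lemma norm_tact
    (hbij : Function.Bijective (fun p : ↥G × ↥M => (p.1 : X) * (p.2 : X)))
    (rho : ↥M → ↥G → ↥G) (sig : ↥M → ↥G → ↥M)
    (hfact : ∀ (s : ↥M) (u : ↥G), (s : X) * (u : X) = (rho s u : X) * (sig s u : X))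
    (norm : X → X)
    (hnorm : ∀ (v : ↥G) (t : ↥M), norm ((v : X) * (t : X)) = (v : X)⁻¹ * (t : X)⁻¹ * (v : X))
    (tact : X → X → X)
    (htact : ∀ (v u : ↥G) (t s : ↥M),
      tact ((v : X) * (t : X)) ((u : X) * (s : X)) =
        (rho (sig s⁻¹ (v * u)⁻¹) (v * u) : X) *
          ((sig s⁻¹ (v * u)⁻¹ : X) * (t : X) * (sig s⁻¹ (v * u)⁻¹ : X)⁻¹))
    (x y : X) : norm (tact x y) = y⁻¹ * norm x * y := by
  obtain ⟨⟨v, t⟩, rfl⟩ := hbij.surjective x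
  obtain ⟨g, m, hgm, h1⟩ := tact_key hbij rho sig hfact tact htact v t y
  have h1' : tact ((v : X) * (t : X)) y = ((g⁻¹ : ↥G) : X) * ((m * t * m⁻¹ : ↥M) : X) := by
    rw [h1]; push_cast; group
  rw [h1', hnorm g⁻¹ (m * t * m⁻¹), hnorm v t]
  have hg : (g : X) = ((v : X) * y)⁻¹ * ((m : X))⁻¹ := by
    rw [← hgm]; group
  push_cast
  rw [hg]; group

end Aux

/-- **The translates of a centralizer-stable subspace form a crossed submodule.**
Let `z₀ ∈ Z` with `X`-conjugacy class `C`, and for each `z ∈ C` fix `z̄` with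
`z = z̄⁻¹z₀z̄`.  Let `J ⊆ J_{z₀}` be stable under the linearized `⋊̃`-action of
the centralizer of `z₀`.  Then `J ⋊̃ z̄ ⊆ J_z` for each `z ∈ C`, the sum
`M_J = Σ_{z∈C}(J ⋊̃ z̄)` is direct, and `M_J` is a crossed submodule of `k[X]`. -/
theorem translates_form_crossed_submodule
    {k X : Type*} [Field k] [Group X] [Fintype X] (G M : Subgroup X)
    (hbij : Function.Bijective (fun p : ↥G × ↥M => (p.1 : X) * (p.2 : X)))
    (rho : ↥M → ↥G → ↥G) (sig : ↥M → ↥G → ↥M)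
    (hfact : ∀ (s : ↥M) (u : ↥G), (s : X) * (u : X) = (rho s u : X) * (sig s u : X))
    (norm : X → X)
    (hnorm : ∀ (v : ↥G) (t : ↥M), norm ((v : X) * (t : X)) = (v : X)⁻¹ * (t : X)⁻¹ * (v : X))
    (tact : X → X → X)
    (htact : ∀ (v u : ↥G) (t s : ↥M),
      tact ((v : X) * (t : X)) ((u : X) * (s : X)) =
        (rho (sig s⁻¹ (v * u)⁻¹) (v * u) : X) *
          ((sig s⁻¹ (v * u)⁻¹ : X) * (t : X) * (sig s⁻¹ (v * u)⁻¹ : X)⁻¹))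
    (z₀ : X) (hz₀ : z₀ ∈ Set.range norm)
    (zbar : X → X) (hzbar : ∀ z : X, IsConj z₀ z → z = (zbar z)⁻¹ * z₀ * zbar z)
    (J : Submodule k (X →₀ k)) (hJ : J ≤ Jsub k norm z₀)
    (hstab : ∀ x ∈ Subgroup.centralizer ({z₀} : Set X), J.map (linTact k tact x) ≤ J) :
    (∀ z : X, IsConj z₀ z → J.map (linTact k tact (zbar z)) ≤ Jsub k norm z) ∧
    iSupIndep (fun z : {z : X // IsConj z₀ z} => J.map (linTact k tact (zbar z))) ∧
    IsCrossedSubmodule k norm tact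
      (⨆ z : {z : X // IsConj z₀ z}, J.map (linTact k tact (zbar z))) := by
  have hassoc : ∀ x a b : X, tact (tact x a) b = tact x (a * b) :=
    tact_assoc hbij rho sig hfact tact htact
  have hnt : ∀ x y : X, norm (tact x y) = y⁻¹ * norm x * y :=
    norm_tact hbij rho sig hfact norm hnorm tact htact
  -- basic facts about the linearized action
  have hsingle : ∀ (y x : X), (linTact k tact y) (Finsupp.single x (1 : k))
      = Finsupp.single (tact x y) 1 := by
    intro y x
    simp [linTact, Finsupp.lmapDomain_apply, Finsupp.mapDomain_single]
  have hTcomp : ∀ (a b : X) (V : Submodule k (X →₀ k)),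
      (V.map (linTact k tact a)).map (linTact k tact b) = V.map (linTact k tact (a * b)) := by
    intro a b V
    rw [← Submodule.map_comp]
    congr 1
    show linTact k tact b ∘ₗ linTact k tact a = linTact k tact (a * b)
    unfold linTact
    rw [← Finsupp.lmapDomain_comp]
    exact congrArg _ (funext fun x => hassoc x a b)
  -- the map of a homogeneous component
  have hJmap : ∀ (z y : X),
      (Jsub k norm z).map (linTact k tact y) ≤ Jsub k norm (y⁻¹ * z * y) := by
    intro z y
    rw [Jsub, Submodule.map_span]
    apply Submodule.span_le.2
    rintro _ ⟨_, ⟨x, hx, rfl⟩, rfl⟩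
    rw [hsingle]
    apply Submodule.subset_span
    refine ⟨tact x y, ?_, rfl⟩
    simp only [Set.mem_preimage, Set.mem_singleton_iff] at hx ⊢
    rw [hnt, hx]
  have hJsupp : ∀ z : X, Jsub k norm z = Finsupp.supported k k (norm ⁻¹' {z}) :=
    fun z => (Finsupp.supported_eq_span_single k _).symm
  -- Part 1
  have part1 : ∀ z : X, IsConj z₀ z → J.map (linTact k tact (zbar z)) ≤ Jsub k norm z := by
    intro z hz
    refine le_trans (Submodule.map_mono hJ) (le_trans (hJmap z₀ (zbar z)) ?_)
    rw [← hzbar z hz]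
  refine ⟨part1, ?_, ?_, ?_⟩
  · -- independence
    have hind : iSupIndep (fun z : {z : X // IsConj z₀ z} => Jsub k norm (z : X)) := by
      intro z
      have hd : Disjoint (Jsub k norm (z : X))
          (Finsupp.supported k k ((norm ⁻¹' {(z : X)})ᶜ) : Submodule k (X →₀ k)) := by
        rw [hJsupp]
        exact Finsupp.disjoint_supported_supported disjoint_compl_right
      refine hd.mono_right ?_
      apply iSup_le; intro j; apply iSup_le; intro hj
      show Jsub k norm (j : X) ≤ _
      refine le_trans (le_of_eq (hJsupp (j : X))) (Finsupp.supported_mono ?_)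
      intro x hx
      simp only [Set.mem_preimage, Set.mem_singleton_iff] at hx
      simp only [Set.mem_compl_iff, Set.mem_preimage, Set.mem_singleton_iff]
      intro h
      exact hj (Subtype.ext (hx ▸ h ▸ rfl))
    exact hind.mono fun z => part1 (z : X) z.2
  · -- stability
    have hcent : ∀ w w' y : X, IsConj z₀ w → IsConj z₀ w' → w' = y⁻¹ * w * y →
        zbar w * y * (zbar w')⁻¹ ∈ Subgroup.centralizer ({z₀} : Set X) := by
      intro w w' y hw hw' hww'
      rw [Subgroup.mem_centralizer_iff]
      intro h hh
      rw [Set.mem_singleton_iff] at hh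
      rw [hh]
      have e1 : w = (zbar w)⁻¹ * z₀ * zbar w := hzbar w hw
      have e2 : w' = (zbar w')⁻¹ * z₀ * zbar w' := hzbar w' hw'
      have key : (zbar w)⁻¹ * z₀ * zbar w * y = y * ((zbar w')⁻¹ * z₀ * zbar w') := by
        rw [← e1, ← e2, hww']; group
      calc z₀ * (zbar w * y * (zbar w')⁻¹)
          = zbar w * ((zbar w)⁻¹ * z₀ * zbar w * y) * (zbar w')⁻¹ := by group
        _ = zbar w * (y * ((zbar w')⁻¹ * z₀ * zbar w')) * (zbar w')⁻¹ := by rw [key]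
        _ = zbar w * y * (zbar w')⁻¹ * z₀ := by group
    intro y
    rw [Submodule.map_iSup]
    apply iSup_le
    intro z
    have hz : IsConj z₀ (z : X) := z.2
    have hconj' : IsConj z₀ (y⁻¹ * (z : X) * y) :=
      hz.trans (isConj_iff.2 ⟨y⁻¹, by group⟩)
    have hc : zbar (z : X) * y * (zbar (y⁻¹ * (z : X) * y))⁻¹ ∈
        Subgroup.centralizer ({z₀} : Set X) :=
      hcent (z : X) (y⁻¹ * (z : X) * y) y hz hconj' rfl
    have hcz : zbar (z : X) * y
        = (zbar (z : X) * y * (zbar (y⁻¹ * (z : X) * y))⁻¹) * zbar (y⁻¹ * (z : X) * y) := by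
      group
    rw [hTcomp, hcz, ← hTcomp]
    refine le_trans (Submodule.map_mono (hstab _ hc)) ?_
    exact le_iSup (fun z : {z : X // IsConj z₀ z} => J.map (linTact k tact (zbar (z : X))))
      ⟨y⁻¹ * (z : X) * y, hconj'⟩
  · -- decomposition
    apply le_antisymm
    · apply iSup_le
      intro z
      have hmem : (z : X) ∈ Set.range norm := by
        obtain ⟨x, hx⟩ := hz₀
        refine ⟨tact x (zbar (z : X)), ?_⟩
        rw [hnt, hx, ← hzbar (z : X) z.2]
      have h1 : J.map (linTact k tact (zbar (z : X))) ≤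
          (⨆ w : {w : X // IsConj z₀ w}, J.map (linTact k tact (zbar (w : X)))) ⊓
            Jsub k norm (z : X) :=
        le_inf (le_iSup (fun w : {w : X // IsConj z₀ w} =>
          J.map (linTact k tact (zbar (w : X)))) z) (part1 (z : X) z.2)
      exact le_trans h1 (le_iSup₂ (f := fun (w : X) (_ : w ∈ Set.range norm) =>
        (⨆ w : {w : X // IsConj z₀ w}, J.map (linTact k tact (zbar (w : X)))) ⊓
          Jsub k norm w) (z : X) hmem)
    · exact iSup₂_le fun w hw => inf_le_left
end

section
/- Define the k-linear map Π : k[X] → k[X] by Π(vt) = vt − δ_{v,e}·Σ_{u∈G} u for v ∈ G, t ∈ M (where δ_{v,e} = 1 if v = e and 0 otherwise), and set 1̄ = Σ_{u∈G} u ∈ k[X]. Then: (a) ker Π = k·1̄; (b) k·1̄ is a crossed submodule of k[X], i.e. 1̄ ⋊̃ x = 1̄ for all x ∈ X and 1̄ ∈ J_e; (c) for every irreducible crossed submodule V ⊆ k[X] with V ≠ k·1̄ one has V ∩ k·1̄ = 0, so the restriction of Π to V is injective. -/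
/-- A crossed submodule is irreducible if it is nonzero and the only crossed
submodules contained in it are `0` and itself. -/
def IsIrreducibleCrossedSubmodule (k : Type*) [Field k] {X : Type*} (norm : X → X)
    (tact : X → X → X) (V : Submodule k (X →₀ k)) : Prop :=
  V ≠ ⊥ ∧ IsCrossedSubmodule k norm tact V ∧
    ∀ W : Submodule k (X →₀ k), IsCrossedSubmodule k norm tact W → W ≤ V → W = ⊥ ∨ W = V

theorem ker_id_sub_smulRight {R V : Type*} [Ring R] [AddCommGroup V] [Module R V]
    (φ : V →ₗ[R] R) {x : V} (hx : φ x = 1) :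
    LinearMap.ker (LinearMap.id - φ.smulRight x) = Submodule.span R {x} := by
  ext f
  simp only [LinearMap.mem_ker, LinearMap.sub_apply, LinearMap.id_apply,
    LinearMap.smulRight_apply, sub_eq_zero, Submodule.mem_span_singleton]
  constructor
  · exact fun h => ⟨φ f, h.symm⟩
  · rintro ⟨c, rfl⟩
    rw [map_smul, hx, smul_eq_mul, mul_one]

theorem mapDomain_sum_single_of_bijective {ι X k : Type*} [Fintype ι] [AddCommMonoid k]
    (i : ι → X) (f : X → X) {g : ι → ι} (hg : Function.Bijective g)
    (hfg : ∀ a, f (i a) = i (g a)) (c : k) :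
    Finsupp.mapDomain f (∑ a, Finsupp.single (i a) c) = ∑ a, Finsupp.single (i a) c := by
  rw [Finsupp.mapDomain_finsetSum]
  simp only [Finsupp.mapDomain_single, hfg]
  exact Equiv.sum_comp (Equiv.ofBijective g hg) fun a => Finsupp.single (i a) c

section ExactFactorization

variable {X : Type*} [Group X] {G M : Subgroup X}

theorem eq_and_eq_of_coe_mul_eq (hGM : Disjoint G M) {u₁ u₂ : G} {s₁ s₂ : M}
    (h : (u₁ : X) * s₁ = u₂ * s₂) : u₁ = u₂ ∧ s₁ = s₂ :=
  Prod.mk_inj.mp <|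
    Subgroup.mul_injective_of_disjoint hGM (a₁ := (u₁, s₁)) (a₂ := (u₂, s₂)) h

theorem coe_mem_iff_eq_one_of_disjoint (hGM : Disjoint G M) {u : G} :
    (u : X) ∈ M ↔ u = 1 := by
  refine ⟨fun hu => ?_, fun hu => hu ▸ M.one_mem⟩
  exact Subtype.ext (Subgroup.disjoint_def.mp hGM u.2 hu)

theorem coe_mul_mem_iff_eq_one (hGM : Disjoint G M) {v : G} {t : M} :
    (v : X) * t ∈ M ↔ v = 1 :=
  (M.mul_mem_cancel_right t.2).trans (coe_mem_iff_eq_one_of_disjoint hGM)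

variable {rho : M → G → G} {sig : M → G → M}

theorem rho_injective (hGM : Disjoint G M)
    (hfact : ∀ (s : M) (u : G), (s : X) * u = rho s u * sig s u) (s : M) :
    Function.Injective (rho s) := by
  have hsplit : ∀ u : G, (u : X) * ((sig s u)⁻¹ : M) = (s : X)⁻¹ * rho s u := fun u => by
    rw [Subgroup.coe_inv, eq_inv_mul_iff_mul_eq, ← mul_assoc, hfact, mul_inv_cancel_right]
  intro u₁ u₂ h
  refine (eq_and_eq_of_coe_mul_eq hGM (s₁ := (sig s u₁)⁻¹) (s₂ := (sig s u₂)⁻¹) ?_).1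
  rw [hsplit, hsplit, h]

theorem rho_sig_inv (hGM : Disjoint G M)
    (hfact : ∀ (s : M) (u : G), (s : X) * u = rho s u * sig s u) (s : M) (w : G) :
    rho (sig s w) w⁻¹ = (rho s w)⁻¹ := by
  refine (eq_and_eq_of_coe_mul_eq hGM (s₁ := sig (sig s w) w⁻¹) (s₂ := s) ?_).1
  rw [← hfact, Subgroup.coe_inv, Subgroup.coe_inv, eq_inv_mul_iff_mul_eq, ← mul_assoc, ← hfact,
    mul_inv_cancel_right]

end ExactFactorization

noncomputable def subgroupSum (k : Type*) {X : Type*} [Semiring k] [Group X] (G : Subgroup X)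
    [Fintype G] : X →₀ k :=
  ∑ u : G, Finsupp.single (u : X) 1

section Intertwiner

variable {k X : Type*} [Group X] {G M : Subgroup X}

theorem linearCombination_indicator_subgroupSum [Semiring k] [Fintype G] (hGM : Disjoint G M) :
    Finsupp.linearCombination k ((M : Set X).indicator (1 : X → k)) (subgroupSum k G) = 1 := by
  classical
  simp only [subgroupSum, map_sum, Finsupp.linearCombination_single, Set.indicator_apply,
    SetLike.mem_coe, coe_mem_iff_eq_one_of_disjoint hGM, Pi.one_apply, smul_eq_mul, one_mul,
    Finset.sum_ite_eq', Finset.mem_univ, if_true]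

theorem eq_id_sub_smulRight_subgroupSum [Ring k] [Fintype G] [DecidableEq G]
    (hGM : G.IsComplement' M)
    {P : (X →₀ k) →ₗ[k] (X →₀ k)}
    (hP : ∀ (v : G) (t : M), P (Finsupp.single ((v : X) * t) 1) =
      Finsupp.single ((v : X) * t) 1 - (if v = 1 then (1 : k) else 0) • subgroupSum k G) :
    P = LinearMap.id - (Finsupp.linearCombination k ((M : Set X).indicator (1 : X → k))).smulRight
      (subgroupSum k G) := by
  refine Finsupp.lhom_ext' fun x => LinearMap.ext_ring ?_
  obtain ⟨⟨v, t⟩, rfl⟩ := hGM.2 x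
  classical
  simp only [LinearMap.comp_apply, Finsupp.lsingle_apply, hP, LinearMap.sub_apply,
    LinearMap.id_apply, LinearMap.smulRight_apply, Finsupp.linearCombination_single, one_smul,
    Set.indicator_apply, SetLike.mem_coe, coe_mul_mem_iff_eq_one hGM.disjoint, Pi.one_apply]

theorem subgroupSum_mem_Jsub [Field k] [Fintype G] {norm : X → X} {z : X}
    (h : ∀ u : G, norm u = z) :
    subgroupSum k G ∈ Jsub k norm z :=
  Submodule.sum_mem _ fun u _ => Submodule.subset_span ⟨u, h u, rfl⟩

variable {rho : M → G → G} {sig : M → G → M} {tact : X → X → X}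

theorem tact_coe_coe_mul (hGM : Disjoint G M)
    (hfact : ∀ (s : M) (u : G), (s : X) * u = rho s u * sig s u)
    (htact : ∀ (v u : G) (t s : M), tact (v * t) (u * s) =
      (rho (sig s⁻¹ (v * u)⁻¹) (v * u) : X) *
        ((sig s⁻¹ (v * u)⁻¹ : X) * t * (sig s⁻¹ (v * u)⁻¹ : X)⁻¹))
    (u u' : G) (s : M) :
    tact u (u' * s) = ((rho s⁻¹ (u * u')⁻¹)⁻¹ : G) := by
  have h := htact u u' 1 s
  simp only [OneMemClass.coe_one, mul_one, mul_inv_cancel] at h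
  rw [h, ← rho_sig_inv hGM hfact, inv_inv]

theorem mapDomain_tact_subgroupSum [Semiring k] [Fintype G] (hGM : G.IsComplement' M)
    (hfact : ∀ (s : M) (u : G), (s : X) * u = rho s u * sig s u)
    (htact : ∀ (u u' : G) (s : M), tact u (u' * s) = ((rho s⁻¹ (u * u')⁻¹)⁻¹ : G)) (x : X) :
    Finsupp.mapDomain (fun w => tact w x) (subgroupSum k G) = subgroupSum k G := by
  obtain ⟨⟨u', s⟩, rfl⟩ := hGM.2 x
  refine mapDomain_sum_single_of_bijective _ _ (g := fun u => (rho s⁻¹ (u * u')⁻¹)⁻¹) ?_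
    (htact · u' s) 1
  exact Finite.injective_iff_bijective.mp <| inv_injective.comp <|
    (rho_injective hGM.disjoint hfact s⁻¹).comp <| inv_injective.comp <| mul_left_injective u'

end Intertwiner

section CrossedSubmodule

variable {k X : Type*} [Field k] {norm : X → X} {tact : X → X → X}

theorem isCrossedSubmodule_span_singleton {x : X →₀ k} {z : X}
    (hinv : ∀ y, linTact k tact y x = x) (hx : x ∈ Jsub k norm z) (hz : z ∈ Set.range norm) :
    IsCrossedSubmodule k norm tact (Submodule.span k {x}) := by
  refine ⟨fun y => by rw [Submodule.map_span, Set.image_singleton, hinv], le_antisymm ?_ ?_⟩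
  · refine le_trans (le_inf le_rfl ?_) (le_iSup₂_of_le z hz le_rfl)
    exact (Submodule.span_singleton_le_iff_mem _ _).mpr hx
  · exact iSup₂_le fun _ _ => inf_le_left

theorem IsIrreducibleCrossedSubmodule.inf_span_singleton_eq_bot {V : Submodule k (X →₀ k)}
    (hV : IsIrreducibleCrossedSubmodule k norm tact V) {x : X →₀ k}
    (hx : IsCrossedSubmodule k norm tact (Submodule.span k {x}))
    (hne : V ≠ Submodule.span k {x}) : V ⊓ Submodule.span k {x} = ⊥ := by
  rw [← disjoint_iff, Submodule.disjoint_span_singleton]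
  intro hxV
  rcases hV.2.2 _ hx ((Submodule.span_singleton_le_iff_mem _ _).mpr hxV) with h | h
  · exact Submodule.span_singleton_eq_bot.mp h
  · exact absurd h.symm hne

end CrossedSubmodule

theorem intertwiner_Pi_kernel_and_injectivity_general
    {k X : Type*} [Field k] [Group X] (G M : Subgroup X)
    [Fintype ↥G] [DecidableEq ↥G]
    (hbij : Function.Bijective (fun p : ↥G × ↥M => (p.1 : X) * (p.2 : X)))
    (rho : ↥M → ↥G → ↥G) (sig : ↥M → ↥G → ↥M)
    (hfact : ∀ (s : ↥M) (u : ↥G), (s : X) * (u : X) = (rho s u : X) * (sig s u : X))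
    (norm : X → X)
    (hnorm : ∀ (v : ↥G) (t : ↥M), norm ((v : X) * (t : X)) = (v : X)⁻¹ * (t : X)⁻¹ * (v : X))
    (tact : X → X → X)
    (htact : ∀ (v u : ↥G) (t s : ↥M),
      tact ((v : X) * (t : X)) ((u : X) * (s : X)) =
        (rho (sig s⁻¹ (v * u)⁻¹) (v * u) : X) *
          ((sig s⁻¹ (v * u)⁻¹ : X) * (t : X) * (sig s⁻¹ (v * u)⁻¹ : X)⁻¹))
    (onebar : X →₀ k)
    (honebar : onebar = ∑ u : ↥G, Finsupp.single ((u : X)) (1 : k))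
    (P : (X →₀ k) →ₗ[k] (X →₀ k))
    (hP : ∀ (v : ↥G) (t : ↥M),
      P (Finsupp.single ((v : X) * (t : X)) (1 : k)) =
        Finsupp.single ((v : X) * (t : X)) (1 : k) -
          (if v = 1 then (1 : k) else 0) • onebar) :
    (LinearMap.ker P = Submodule.span k {onebar}) ∧
    (∀ x : X, Finsupp.mapDomain (fun w => tact w x) onebar = onebar) ∧
    (onebar ∈ Jsub k norm (1 : X)) ∧
    (∀ V : Submodule k (X →₀ k), IsIrreducibleCrossedSubmodule k norm tact V →
      V ≠ Submodule.span k {onebar} →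
      V ⊓ Submodule.span k {onebar} = ⊥ ∧ ∀ a ∈ V, ∀ b ∈ V, P a = P b → a = b) := by
  obtain rfl : onebar = subgroupSum k G := honebar
  have hGM : Disjoint G M := Subgroup.IsComplement'.disjoint hbij
  have hker : LinearMap.ker P = Submodule.span k {subgroupSum k G} := by
    rw [eq_id_sub_smulRight_subgroupSum hbij hP]
    exact ker_id_sub_smulRight _ (linearCombination_indicator_subgroupSum hGM)
  have hinv := mapDomain_tact_subgroupSum (k := k) hbij hfact (tact_coe_coe_mul hGM hfact htact)
  have hJ : subgroupSum k G ∈ Jsub k norm 1 :=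
    subgroupSum_mem_Jsub fun u => by simpa using hnorm u 1
  have hcrossed : IsCrossedSubmodule k norm tact (Submodule.span k {subgroupSum k G}) :=
    isCrossedSubmodule_span_singleton hinv hJ ⟨1, by simpa using hnorm 1 1⟩
  refine ⟨hker, hinv, hJ, fun V hV hne => ?_⟩
  have hVinf := hV.inf_span_singleton_eq_bot hcrossed hne
  have hinj : Set.InjOn P V :=
    LinearMap.injOn_of_disjoint_ker le_rfl (hker ▸ disjoint_iff.mpr hVinf)
  exact ⟨hVinf, fun a ha b hb => hinj ha hb⟩

/-- **The intertwiner `Π` and the invariant element `1̄`.**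
Define `Π : k[X] → k[X]` by `Π(vt) = vt − δ_{v,e} Σ_{u∈G} u` and set
`1̄ = Σ_{u∈G} u`.  Then (a) `ker Π = k·1̄`; (b) `k·1̄` is a crossed submodule:
`1̄ ⋊̃ x = 1̄` for all `x ∈ X` and `1̄ ∈ J_e`; (c) for every irreducible crossed
submodule `V ≠ k·1̄` one has `V ∩ k·1̄ = 0`, so `Π` restricted to `V` is injective. -/
theorem intertwiner_Pi_kernel_and_injectivity
    {k X : Type*} [Field k] [Group X] [Fintype X] (G M : Subgroup X)
    [Fintype ↥G] [DecidableEq ↥G]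
    (hbij : Function.Bijective (fun p : ↥G × ↥M => (p.1 : X) * (p.2 : X)))
    (rho : ↥M → ↥G → ↥G) (sig : ↥M → ↥G → ↥M)
    (hfact : ∀ (s : ↥M) (u : ↥G), (s : X) * (u : X) = (rho s u : X) * (sig s u : X))
    (norm : X → X)
    (hnorm : ∀ (v : ↥G) (t : ↥M), norm ((v : X) * (t : X)) = (v : X)⁻¹ * (t : X)⁻¹ * (v : X))
    (tact : X → X → X)
    (htact : ∀ (v u : ↥G) (t s : ↥M),
      tact ((v : X) * (t : X)) ((u : X) * (s : X)) =
        (rho (sig s⁻¹ (v * u)⁻¹) (v * u) : X) *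
          ((sig s⁻¹ (v * u)⁻¹ : X) * (t : X) * (sig s⁻¹ (v * u)⁻¹ : X)⁻¹))
    (onebar : X →₀ k)
    (honebar : onebar = ∑ u : ↥G, Finsupp.single ((u : X)) (1 : k))
    (P : (X →₀ k) →ₗ[k] (X →₀ k))
    (hP : ∀ (v : ↥G) (t : ↥M),
      P (Finsupp.single ((v : X) * (t : X)) (1 : k)) =
        Finsupp.single ((v : X) * (t : X)) (1 : k) -
          (if v = 1 then (1 : k) else 0) • onebar) :
    (LinearMap.ker P = Submodule.span k {onebar}) ∧
    (∀ x : X, Finsupp.mapDomain (fun w => tact w x) onebar = onebar) ∧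
    (onebar ∈ Jsub k norm (1 : X)) ∧
    (∀ V : Submodule k (X →₀ k), IsIrreducibleCrossedSubmodule k norm tact V →
      V ≠ Submodule.span k {onebar} →
      V ⊓ Submodule.span k {onebar} = ⊥ ∧ ∀ a ∈ V, ∀ b ∈ V, P a = P b → a = b) :=
  intertwiner_Pi_kernel_and_injectivity_general G M hbij rho sig hfact norm hnorm tact htact onebar
    honebar P hP
end

section
/- For a general exact factorization X = GM: (i) Z = ∪_{u∈G} u⁻¹Mu; (ii) for each t ∈ M, the X-conjugacy class of t equals ∪_{u∈G} u⁻¹ C^M_t u, where C^M_t denotes the M-conjugacy class of t; consequently Z is the union, over the conjugacy classes C^M of M, of the sets C^X = ∪_{u∈G}(u⁻¹ C^M u), and each such set C^X is a single conjugacy class of X. -/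
/-- **`Z` and conjugacy classes in a general factorization `X = GM`.**
(i) `Z = range ‖·‖ = ∪_{u∈G} u⁻¹Mu`; (ii) for each `t ∈ M` the `X`-conjugacy
class of `t` equals `∪_{u∈G} u⁻¹ C^M_t u`, where `C^M_t = {m⁻¹tm : m ∈ M}` is the
`M`-conjugacy class of `t`; consequently `Z` is the union of the `X`-conjugacy
classes of elements of `M`, each of which is of the above form. -/
theorem range_norm_and_conjugacy_classes
    {X : Type*} [Group X] [Fintype X] (G M : Subgroup X)
    (hbij : Function.Bijective (fun p : ↥G × ↥M => (p.1 : X) * (p.2 : X)))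
    (norm : X → X)
    (hnorm : ∀ (v : ↥G) (t : ↥M), norm ((v : X) * (t : X)) = (v : X)⁻¹ * (t : X)⁻¹ * (v : X)) :
    (Set.range norm = ⋃ u ∈ (G : Set X), (fun x => u⁻¹ * x * u) '' (M : Set X)) ∧
    (∀ t : ↥M, {x : X | IsConj (t : X) x} =
      ⋃ u ∈ (G : Set X), (fun x => u⁻¹ * x * u) ''
        ((fun m => m⁻¹ * (t : X) * m) '' (M : Set X))) ∧
    (Set.range norm = ⋃ t : ↥M, {x : X | IsConj (t : X) x}) := by
  obtain ⟨hinj, hsurj⟩ := hbij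
  -- every element of X can be written as m * u with m ∈ M, u ∈ G
  have hMG : ∀ x : X, ∃ (m : ↥M) (u : ↥G), x = (m : X) * (u : X) := by
    intro x
    obtain ⟨⟨u, m⟩, h⟩ := hsurj x⁻¹
    refine ⟨m⁻¹, u⁻¹, ?_⟩
    simp only at h
    push_cast
    rw [← mul_inv_rev, h, inv_inv]
  refine ⟨?_, ?_, ?_⟩
  · ext x
    simp only [Set.mem_range, Set.mem_iUnion, Set.mem_image, SetLike.mem_coe]
    constructor
    · rintro ⟨y, rfl⟩
      obtain ⟨⟨u, m⟩, rfl⟩ := hsurj y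
      rw [hnorm u m]
      exact ⟨u, u.2, (m : X)⁻¹, M.inv_mem m.2, by group⟩
    · rintro ⟨u, hu, m, hm, rfl⟩
      refine ⟨u * m⁻¹, ?_⟩
      have := hnorm ⟨u, hu⟩ (⟨m, hm⟩ : ↥M)⁻¹
      push_cast at this
      rw [this]; group
  · intro t
    ext x
    simp only [Set.mem_setOf_eq, Set.mem_iUnion, Set.mem_image, SetLike.mem_coe]
    constructor
    · intro h
      obtain ⟨g, hg⟩ := isConj_iff.mp h
      obtain ⟨m, u, hmu⟩ := hMG g⁻¹
      refine ⟨u, u.2, (m : X)⁻¹ * (t : X) * (m : X), ⟨(m : X), m.2, rfl⟩, ?_⟩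
      have : x = g * (t : X) * g⁻¹ := hg.symm
      rw [this, hmu]
      have hginv : g = ((m : X) * (u : X))⁻¹ := by rw [← hmu]; simp
      rw [hginv]; group
    · rintro ⟨u, hu, y, ⟨m, hm, rfl⟩, rfl⟩
      exact isConj_iff.mpr ⟨u⁻¹ * m⁻¹, by group⟩
  · ext x
    simp only [Set.mem_range, Set.mem_iUnion, Set.mem_setOf_eq]
    constructor
    · rintro ⟨y, rfl⟩
      obtain ⟨⟨u, m⟩, rfl⟩ := hsurj y
      rw [hnorm u m]
      exact ⟨m⁻¹, isConj_iff.mpr ⟨(u : X)⁻¹, by push_cast; group⟩⟩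
    · rintro ⟨t, ht⟩
      obtain ⟨g, hg⟩ := isConj_iff.mp ht
      obtain ⟨m, u, hmu⟩ := hMG g⁻¹
      set s : ↥M := m⁻¹ * t * m with hs
      refine ⟨(u : X) * ((s⁻¹ : ↥M) : X), ?_⟩
      rw [hnorm u s⁻¹]
      have hginv : g = ((m : X) * (u : X))⁻¹ := by rw [← hmu]; simp
      rw [← hg, hginv, hs]
      push_cast
      group
end

section
/- Assume the factorization is semidirect in the sense that s◁u = s for all s ∈ M, u ∈ G (equivalently su = (s▷u)s, so G is normal in X). Then the map sending an M-conjugacy class C^M to the X-conjugacy class ∪_{u∈G}(u⁻¹ C^M u) is injective from the set of conjugacy classes of M to the set of conjugacy classes of X contained in Z; equivalently, any two elements of M that are conjugate in X are already conjugate in M. -/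
/-!
Since `s * u * s⁻¹ = s ▷ u ∈ G`, the subgroup `M` normalizes `G`; as `X = G M`, `G` is normal
and `M ≅ X ⧸ G`. The resulting retraction `X →* M` fixes `M` pointwise and preserves
conjugacy, so elements of `M` conjugate in `X` are conjugate in `M`. Every element `s` lies in
its own `X`-class `⋃ u, u⁻¹ s^M u`, so equal `X`-classes give `X`-conjugate representatives.
-/

namespace Subgroup

variable {X : Type*} [Group X] {N H : Subgroup X}

theorem IsComplement'.normal_of_le_normalizer (h : N.IsComplement' H)
    (hH : H ≤ normalizer (N : Set X)) : N.Normal :=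
  normalizer_eq_top_iff.mp <| top_unique <| h.sup_eq_top ▸ sup_le le_normalizer hH

noncomputable def IsComplement'.retraction [N.Normal] (h : N.IsComplement' H) : X →* H :=
  h.symm.QuotientMulEquiv.toMonoidHom.comp (QuotientGroup.mk' N)

@[simp]
theorem IsComplement'.retraction_coe [N.Normal] (h : N.IsComplement' H) (k : H) :
    h.retraction k = k :=
  h.symm.QuotientMulEquiv.apply_symm_apply k

theorem IsComplement'.isConj_of_isConj_coe [N.Normal] (h : N.IsComplement' H) {s t : H}
    (hst : IsConj (s : X) (t : X)) : IsConj s t := by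
  simpa using h.retraction.map_isConj hst

end Subgroup

theorem self_mem_iUnion_conj_image_conj {X : Type*} [Group X] (G M : Subgroup X) (s : X) :
    s ∈ ⋃ u ∈ (G : Set X), (fun x => u⁻¹ * x * u) ''
      ((fun m => m⁻¹ * s * m) '' (M : Set X)) :=
  Set.mem_biUnion G.one_mem ⟨s, ⟨1, M.one_mem, by simp⟩, by simp⟩

theorem isConj_of_mem_iUnion_conj_image_conj {X : Type*} [Group X] {G M : Subgroup X} {s t : X}
    (hs : s ∈ ⋃ u ∈ (G : Set X), (fun x => u⁻¹ * x * u) ''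
      ((fun m => m⁻¹ * t * m) '' (M : Set X))) :
    IsConj t s := by
  simp only [Set.mem_iUnion, Set.mem_image, SetLike.mem_coe, exists_prop] at hs
  obtain ⟨u, -, _, ⟨m, -, rfl⟩, rfl⟩ := hs
  exact isConj_iff.mpr ⟨(m * u)⁻¹, by group⟩

theorem conj_class_map_injective_semidirect_general
    {X : Type*} [Group X] (G M : Subgroup X)
    (hbij : Function.Bijective (fun p : ↥G × ↥M => (p.1 : X) * (p.2 : X)))
    (rho : ↥M → ↥G → ↥G) (sig : ↥M → ↥G → ↥M)
    (hfact : ∀ (s : ↥M) (u : ↥G), (s : X) * (u : X) = (rho s u : X) * (sig s u : X))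
    (hsemi : ∀ (s : ↥M) (u : ↥G), sig s u = s) :
    (∀ s t : ↥M,
      (⋃ u ∈ (G : Set X), (fun x => u⁻¹ * x * u) ''
        ((fun m => m⁻¹ * (s : X) * m) '' (M : Set X))) =
      (⋃ u ∈ (G : Set X), (fun x => u⁻¹ * x * u) ''
        ((fun m => m⁻¹ * (t : X) * m) '' (M : Set X))) →
      IsConj s t) ∧
    (∀ s t : ↥M, IsConj (s : X) (t : X) → IsConj s t) := by
  have hcompl : G.IsComplement' M := hbij
  have hnorm : M ≤ Subgroup.normalizer (G : Set X) := by
    refine Subgroup.le_normalizer_iff.mpr fun s hs u hu => ?_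
    have hconj : s * u * s⁻¹ = rho ⟨s, hs⟩ ⟨u, hu⟩ := by
      rw [hfact ⟨s, hs⟩ ⟨u, hu⟩, hsemi]
      group
    exact hconj ▸ (rho _ _).2
  have hGnormal := hcompl.normal_of_le_normalizer hnorm
  refine ⟨fun s t hclass => ?_, fun s t => hcompl.isConj_of_isConj_coe⟩
  have hs := self_mem_iUnion_conj_image_conj G M (s : X)
  rw [hclass] at hs
  exact (hcompl.isConj_of_isConj_coe (isConj_of_mem_iUnion_conj_image_conj hs)).symm

/-- **Injectivity of `C^M ↦ C^X` in the semidirect case.**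
If `s◁u = s` for all `s ∈ M`, `u ∈ G` (so `su = (s▷u)s` and `G` is normal in `X`),
then the map `C^M ↦ ∪_{u∈G} u⁻¹ C^M u` from conjugacy classes of `M` to conjugacy
classes of `X` contained in `Z` is injective; equivalently, any two elements of
`M` conjugate in `X` are already conjugate in `M`. -/
theorem conj_class_map_injective_semidirect
    {X : Type*} [Group X] [Fintype X] (G M : Subgroup X)
    (hbij : Function.Bijective (fun p : ↥G × ↥M => (p.1 : X) * (p.2 : X)))
    (rho : ↥M → ↥G → ↥G) (sig : ↥M → ↥G → ↥M)
    (hfact : ∀ (s : ↥M) (u : ↥G), (s : X) * (u : X) = (rho s u : X) * (sig s u : X))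
    (hsemi : ∀ (s : ↥M) (u : ↥G), sig s u = s) :
    (∀ s t : ↥M,
      (⋃ u ∈ (G : Set X), (fun x => u⁻¹ * x * u) ''
        ((fun m => m⁻¹ * (s : X) * m) '' (M : Set X))) =
      (⋃ u ∈ (G : Set X), (fun x => u⁻¹ * x * u) ''
        ((fun m => m⁻¹ * (t : X) * m) '' (M : Set X))) →
      IsConj s t) ∧
    (∀ s t : ↥M, IsConj (s : X) (t : X) → IsConj s t) :=
  conj_class_map_injective_semidirect_general G M hbij rho sig hfact hsemi
end

section
/- Assume s◁u = s for all s ∈ M, u ∈ G (the semidirect case X = G⋊M). Let t₀ ∈ M and let C₀^M denote the M-conjugacy class of t₀⁻¹. Then: (i) the X-conjugacy class of t₀⁻¹ equals { u⁻¹(t▷u)·t : t ∈ C₀^M, u ∈ G }; (ii) the set N₀ = { u ∈ G : t₀▷u = u } is a subgroup of G, and the fiber ‖·‖⁻¹(t₀⁻¹) equals N₀·t₀ = { u·t₀ : u ∈ N₀ }. -/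
/-- **Classes and fibers in the semidirect case `X = G⋊M`.**
Assume `s◁u = s` for all `s ∈ M`, `u ∈ G`.  For `t₀ ∈ M`, with `C₀^M` the
`M`-conjugacy class of `t₀⁻¹`: (i) the `X`-conjugacy class of `t₀⁻¹` equals
`{ u⁻¹(t▷u)t : t ∈ C₀^M, u ∈ G }`; (ii) the set `N₀ = {u ∈ G : t₀▷u = u}` is a
subgroup of `G` and `‖·‖⁻¹(t₀⁻¹) = N₀·t₀`. -/
theorem semidirect_class_and_fiber
    {X : Type*} [Group X] [Fintype X] (G M : Subgroup X)
    (hbij : Function.Bijective (fun p : ↥G × ↥M => (p.1 : X) * (p.2 : X)))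
    (rho : ↥M → ↥G → ↥G) (sig : ↥M → ↥G → ↥M)
    (hfact : ∀ (s : ↥M) (u : ↥G), (s : X) * (u : X) = (rho s u : X) * (sig s u : X))
    (hsemi : ∀ (s : ↥M) (u : ↥G), sig s u = s)
    (norm : X → X)
    (hnorm : ∀ (v : ↥G) (t : ↥M), norm ((v : X) * (t : X)) = (v : X)⁻¹ * (t : X)⁻¹ * (v : X))
    (t₀ : ↥M) :
    ({x : X | IsConj ((t₀ : X))⁻¹ x} =
      {x : X | ∃ t : ↥M, IsConj (t₀⁻¹ : ↥M) t ∧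
        ∃ u : ↥G, x = (u : X)⁻¹ * (rho t u : X) * (t : X)}) ∧
    (∃ N₀ : Subgroup ↥G, (N₀ : Set ↥G) = {u : ↥G | rho t₀ u = u}) ∧
    (norm ⁻¹' {((t₀ : X))⁻¹} =
      (fun u : ↥G => (u : X) * (t₀ : X)) '' {u : ↥G | rho t₀ u = u}) := by
  have key : ∀ (s : ↥M) (u : ↥G), (rho s u : X) = (s : X) * (u : X) * (s : X)⁻¹ := by
    intro s u
    have h := hfact s u
    rw [hsemi] at h
    rw [eq_mul_inv_iff_mul_eq]
    exact h.symm
  have hrho_iff : ∀ u : ↥G, rho t₀ u = u ↔ (t₀ : X) * u = u * t₀ := by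
    intro u
    rw [← Subtype.coe_inj, key, mul_inv_eq_iff_eq_mul]
  refine ⟨?_, ⟨Subgroup.comap G.subtype (Subgroup.centralizer {(t₀ : X)}), ?_⟩, ?_⟩
  · ext x
    simp only [Set.mem_setOf_eq]
    constructor
    · intro hconj
      obtain ⟨c, hc⟩ := isConj_iff.mp hconj
      obtain ⟨⟨v, t'⟩, rfl⟩ := hbij.surjective c
      refine ⟨t' * t₀⁻¹ * t'⁻¹, isConj_iff.mpr ⟨t', rfl⟩, v⁻¹, ?_⟩
      rw [← hc, key]
      push_cast
      group
    · rintro ⟨t, ht, u, rfl⟩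
      obtain ⟨s, hs⟩ := isConj_iff.mp ht
      have hts : (t : X) = (s : X) * (t₀ : X)⁻¹ * (s : X)⁻¹ := by
        rw [← hs]; push_cast; ring_nf
      rw [isConj_iff]
      refine ⟨(u : X)⁻¹ * s, ?_⟩
      rw [key, hts]
      group
  · ext u
    simp only [Subgroup.mem_comap, Subgroup.coe_subtype, SetLike.mem_coe,
      Subgroup.mem_centralizer_iff, Set.mem_singleton_iff, Set.mem_setOf_eq,
      forall_eq, hrho_iff]
  · ext x
    simp only [Set.mem_preimage, Set.mem_singleton_iff, Set.mem_image, Set.mem_setOf_eq]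
    constructor
    · intro hx
      obtain ⟨⟨v, t⟩, rfl⟩ := hbij.surjective x
      simp only at hx ⊢
      rw [hnorm] at hx
      have h2 : (t : X)⁻¹ * v = v * (t₀ : X)⁻¹ := by
        rw [← hx]; group
      have h3 : (fun p : ↥G × ↥M => (p.1 : X) * (p.2 : X)) (rho t⁻¹ v, t⁻¹)
          = (fun p : ↥G × ↥M => (p.1 : X) * (p.2 : X)) (v, t₀⁻¹) := by
        simp only [key]
        push_cast
        simpa [mul_assoc] using h2
      have h4 := hbij.injective h3
      have h5 : rho t⁻¹ v = v := congrArg Prod.fst h4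
      have h6 : (t⁻¹ : ↥M) = t₀⁻¹ := congrArg Prod.snd h4
      have ht : t = t₀ := inv_injective h6
      subst ht
      refine ⟨v, ?_, rfl⟩
      rw [hrho_iff]
      have h5' : (t : X)⁻¹ * v * ((t : X)⁻¹)⁻¹ = v := by
        have := congrArg (Subtype.val) h5
        rwa [key] at this
      rw [inv_inv] at h5'
      conv_lhs => rw [← h5']
      group
    · rintro ⟨u, hu, rfl⟩
      rw [hnorm]
      have c : Commute (t₀ : X) (u : X) := (hrho_iff u).mp hu
      rw [mul_assoc, c.inv_left.eq, inv_mul_cancel_left]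
end

section
/- Assume s◁u = s for all s ∈ M, u ∈ G (the semidirect case X = G⋊M). Let t₀ ∈ M, N₀ = { u ∈ G : t₀▷u = u }, and let cent_M(t₀) denote the centralizer of t₀ in M. Then: (i) the centralizer of t₀ in X equals N₀·cent_M(t₀) = { u·s : u ∈ N₀, s ∈ cent_M(t₀) }; (ii) for all v, u ∈ N₀ and s ∈ cent_M(t₀) one has (v·t₀) ⋊̃ (u·s) = (s⁻¹▷(vu))·t₀. -/
/-- **Centralizer and `⋊̃`-action in the semidirect case `X = G⋊M`.**
Assume `s◁u = s` for all `s ∈ M`, `u ∈ G`.  For `t₀ ∈ M`, with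
`N₀ = {u ∈ G : t₀▷u = u}` and `cent_M(t₀)` the centralizer of `t₀` in `M`:
(i) the centralizer of `t₀` in `X` is `N₀·cent_M(t₀)`;
(ii) `(v·t₀) ⋊̃ (u·s) = (s⁻¹▷(vu))·t₀` for all `v, u ∈ N₀`, `s ∈ cent_M(t₀)`. -/
theorem semidirect_centralizer_and_action
    {X : Type*} [Group X] [Fintype X] (G M : Subgroup X)
    (hbij : Function.Bijective (fun p : ↥G × ↥M => (p.1 : X) * (p.2 : X)))
    (rho : ↥M → ↥G → ↥G) (sig : ↥M → ↥G → ↥M)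
    (hfact : ∀ (s : ↥M) (u : ↥G), (s : X) * (u : X) = (rho s u : X) * (sig s u : X))
    (hsemi : ∀ (s : ↥M) (u : ↥G), sig s u = s)
    (tact : X → X → X)
    (htact : ∀ (v u : ↥G) (t s : ↥M),
      tact ((v : X) * (t : X)) ((u : X) * (s : X)) =
        (rho (sig s⁻¹ (v * u)⁻¹) (v * u) : X) *
          ((sig s⁻¹ (v * u)⁻¹ : X) * (t : X) * (sig s⁻¹ (v * u)⁻¹ : X)⁻¹))
    (t₀ : ↥M) :
    ((Subgroup.centralizer ({(t₀ : X)} : Set X) : Set X) =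
      {x : X | ∃ u : ↥G, ∃ s : ↥M,
        rho t₀ u = u ∧ s * t₀ = t₀ * s ∧ x = (u : X) * (s : X)}) ∧
    (∀ (v u : ↥G) (s : ↥M), rho t₀ v = v → rho t₀ u = u → s * t₀ = t₀ * s →
      tact ((v : X) * (t₀ : X)) ((u : X) * (s : X)) =
        (rho s⁻¹ (v * u) : X) * (t₀ : X)) := by
  have hfact' : ∀ (s : ↥M) (u : ↥G), (s : X) * (u : X) = (rho s u : X) * (s : X) := by
    intro s u
    rw [hfact s u, hsemi s u]
  constructor
  · ext x
    simp only [Set.mem_setOf_eq, SetLike.mem_coe, Subgroup.mem_centralizer_iff,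
      Set.mem_singleton_iff, forall_eq]
    constructor
    · intro hx
      obtain ⟨⟨u, s⟩, hus⟩ := hbij.surjective x
      simp only at hus
      subst hus
      -- hx : t₀ * (u*s) = (u*s) * t₀
      have key : (fun p : ↥G × ↥M => (p.1 : X) * (p.2 : X)) (rho t₀ u, t₀ * s)
          = (fun p : ↥G × ↥M => (p.1 : X) * (p.2 : X)) (u, s * t₀) := by
        simp only [Subgroup.coe_mul]
        rw [← mul_assoc, ← hfact' t₀ u, mul_assoc, hx, mul_assoc]
      have := hbij.injective key
      have h1 : rho t₀ u = u := congrArg Prod.fst this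
      have h2 : t₀ * s = s * t₀ := congrArg Prod.snd this
      exact ⟨u, s, h1, h2.symm, rfl⟩
    · rintro ⟨u, s, h1, h2, rfl⟩
      have : (t₀ : X) * u = (u : X) * t₀ := by rw [hfact' t₀ u, h1]
      have h2' : (s : X) * t₀ = (t₀ : X) * s := congrArg Subtype.val h2
      rw [← mul_assoc, this, mul_assoc, mul_assoc, h2']
  · intro v u s hv hu hs
    rw [htact v u t₀ s, hsemi]
    have h2' : (s : X) * t₀ = (t₀ : X) * s := congrArg Subtype.val hs
    congr 1
    simp only [InvMemClass.coe_inv]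
    rw [inv_inv, mul_assoc, ← h2', ← mul_assoc, inv_mul_cancel, one_mul]
end

section
/- Assume s◁u = s for all s ∈ M, u ∈ G (the semidirect case X = G⋊M). Let t₀ ∈ M, N₀ = { u ∈ G : t₀▷u = u }, and let cent_M(t₀) be the centralizer of t₀ in M. Then the element m₀ = Σ_{v∈N₀} v·t₀ ∈ k[X] satisfies m₀ ⋊̃ (u·s) = m₀ for all u ∈ N₀ and s ∈ cent_M(t₀); in other words, k·m₀ is a one-dimensional trivial subrepresentation of J_{t₀⁻¹} = span_k ‖·‖⁻¹(t₀⁻¹) under the linearized ⋊̃-action of the centralizer N₀·cent_M(t₀) of t₀ in X. -/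
/-- **The canonical invariant element in the semidirect case.**
Assume `s◁u = s` for all `s ∈ M`, `u ∈ G`.  For `t₀ ∈ M` and
`N₀ = {u ∈ G : t₀▷u = u}`, the element `m₀ = Σ_{v∈N₀} v·t₀ ∈ k[X]` is a nonzero
element of `J_{t₀⁻¹}` satisfying `m₀ ⋊̃ (u·s) = m₀` for all `u ∈ N₀` and
`s ∈ cent_M(t₀)`; i.e. `k·m₀` is a one-dimensional trivial subrepresentation of
`J_{t₀⁻¹}` under the linearized `⋊̃`-action of the centralizer `N₀·cent_M(t₀)`. -/
theorem canonical_invariant_element_semidirect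
    {k X : Type*} [Field k] [Group X] [Fintype X] (G M : Subgroup X)
    [Fintype ↥G] [DecidableEq ↥G]
    (hbij : Function.Bijective (fun p : ↥G × ↥M => (p.1 : X) * (p.2 : X)))
    (rho : ↥M → ↥G → ↥G) (sig : ↥M → ↥G → ↥M)
    (hfact : ∀ (s : ↥M) (u : ↥G), (s : X) * (u : X) = (rho s u : X) * (sig s u : X))
    (hsemi : ∀ (s : ↥M) (u : ↥G), sig s u = s)
    (norm : X → X)
    (hnorm : ∀ (v : ↥G) (t : ↥M), norm ((v : X) * (t : X)) = (v : X)⁻¹ * (t : X)⁻¹ * (v : X))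
    (tact : X → X → X)
    (htact : ∀ (v u : ↥G) (t s : ↥M),
      tact ((v : X) * (t : X)) ((u : X) * (s : X)) =
        (rho (sig s⁻¹ (v * u)⁻¹) (v * u) : X) *
          ((sig s⁻¹ (v * u)⁻¹ : X) * (t : X) * (sig s⁻¹ (v * u)⁻¹ : X)⁻¹))
    (t₀ : ↥M) (m₀ : X →₀ k)
    (hm₀ : m₀ = ∑ v : {u : ↥G // rho t₀ u = u},
      Finsupp.single (((v : ↥G) : X) * (t₀ : X)) (1 : k)) :
    m₀ ≠ 0 ∧
    m₀ ∈ Jsub k norm (((t₀ : X))⁻¹) ∧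
    (∀ (u : ↥G) (s : ↥M), rho t₀ u = u → s * t₀ = t₀ * s →
      Finsupp.mapDomain (fun x => tact x ((u : X) * (s : X))) m₀ = m₀) := by
  -- rho is conjugation
  have hrho : ∀ (s : ↥M) (w : ↥G), (rho s w : X) = (s : X) * w * (s : X)⁻¹ := by
    intro s w
    have h := hfact s w
    rw [hsemi] at h
    rw [eq_mul_inv_iff_mul_eq]
    exact h.symm
  -- commutation in X for elements of N₀
  have hcomm : ∀ w : ↥G, rho t₀ w = w → (t₀ : X) * w = (w : X) * t₀ := by
    intro w hw
    have : (rho t₀ w : X) = (w : X) := by rw [hw]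
    rw [hrho] at this
    rw [mul_inv_eq_iff_eq_mul] at this
    exact this
  have h1 : rho t₀ (1 : ↥G) = 1 := by
    have h : ((rho t₀ (1 : ↥G) : ↥G) : X) = ((1 : ↥G) : X) := by rw [hrho]; simp
    exact Subtype.coe_injective h
  classical
  refine ⟨?_, ?_, ?_⟩
  · -- nonzero: coefficient at t₀ is 1
    intro h
    have hval : m₀ ((t₀ : X)) = 1 := by
      rw [hm₀, Finsupp.finset_sum_apply]
      rw [Finset.sum_eq_single (⟨1, h1⟩ : {u : ↥G // rho t₀ u = u})]
      · simp
      · intro b _ hb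
        rw [Finsupp.single_apply, if_neg]
        intro hc
        apply hb
        have hb1 : (((b : {u : ↥G // rho t₀ u = u}) : ↥G) : X) = 1 :=
          mul_right_cancel (b := (t₀ : X)) (by rw [one_mul]; exact hc)
        exact Subtype.ext (Subtype.coe_injective (by simpa using hb1))
      · intro he; exact absurd (Finset.mem_univ _) he
    rw [h] at hval
    simp at hval
  · -- membership in Jsub
    rw [hm₀]
    apply Submodule.sum_mem
    intro v _
    apply Submodule.subset_span
    refine ⟨((v : ↥G) : X) * (t₀ : X), ?_, rfl⟩
    simp only [Set.mem_preimage, Set.mem_singleton_iff]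
    rw [hnorm]
    have hc := hcomm v v.2
    calc ((v:↥G):X)⁻¹ * (t₀:X)⁻¹ * ((v:↥G):X)
        = ((t₀:X) * ((v:↥G):X))⁻¹ * ((v:↥G):X) := by rw [mul_inv_rev]
      _ = (((v:↥G):X) * (t₀:X))⁻¹ * ((v:↥G):X) := by rw [hc]
      _ = (t₀:X)⁻¹ := by group
  · -- invariance
    intro u s hu hst
    have hst' : (s : X) * t₀ = (t₀ : X) * s := by exact_mod_cast congrArg (Subtype.val) hst
    -- conjugation by t₀ fixes s, s⁻¹, u, v
    have key : ∀ a b : X, (t₀:X)*a*(t₀:X)⁻¹ = a → (t₀:X)*b*(t₀:X)⁻¹ = b →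
        (t₀:X)*(a*b)*(t₀:X)⁻¹ = a*b := by
      intro a b ha hb
      calc (t₀:X)*(a*b)*(t₀:X)⁻¹ = ((t₀:X)*a*(t₀:X)⁻¹)*((t₀:X)*b*(t₀:X)⁻¹) := by group
        _ = a*b := by rw [ha, hb]
    have fix_s : (t₀:X)*(s:X)*(t₀:X)⁻¹ = (s:X) := by
      rw [← hst']; group
    have fix_sinv : (t₀:X)*(s:X)⁻¹*(t₀:X)⁻¹ = (s:X)⁻¹ := by
      have := congrArg (·⁻¹) fix_s
      simpa [mul_inv_rev, mul_assoc] using this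
    have fix_of_mem : ∀ w : ↥G, rho t₀ w = w → (t₀:X)*(w:X)*(t₀:X)⁻¹ = (w:X) := by
      intro w hw
      rw [hcomm w hw]; group
    -- the reindexing map
    have hmem : ∀ v : {w : ↥G // rho t₀ w = w}, rho t₀ (rho s⁻¹ ((v : ↥G) * u)) = rho s⁻¹ ((v : ↥G) * u) := by
      intro v
      have hx : ((rho s⁻¹ ((v:↥G)*u) : ↥G) : X) = (s:X)⁻¹ * (((v:↥G):X) * (u:X) * (s:X)) := by
        rw [hrho]; push_cast; group
      apply Subtype.coe_injective
      show ((rho t₀ (rho s⁻¹ ((v:↥G)*u)) : ↥G) : X) = ((rho s⁻¹ ((v:↥G)*u) : ↥G) : X)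
      rw [hrho t₀, hx]
      apply key _ _ fix_sinv
      apply key _ _ (key _ _ (fix_of_mem v v.2) (fix_of_mem u hu)) fix_s
    set φ : {w : ↥G // rho t₀ w = w} → {w : ↥G // rho t₀ w = w} :=
      fun v => ⟨rho s⁻¹ ((v : ↥G) * u), hmem v⟩ with hφ
    have hφbij : Function.Bijective φ := by
      rw [Fintype.bijective_iff_injective_and_card]
      refine ⟨?_, rfl⟩
      intro a b hab
      have : ((rho s⁻¹ ((a:↥G)*u) : ↥G) : X) = ((rho s⁻¹ ((b:↥G)*u) : ↥G) : X) := by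
        rw [show (rho s⁻¹ ((a:↥G)*u) : ↥G) = (rho s⁻¹ ((b:↥G)*u) : ↥G) from congrArg Subtype.val hab]
      rw [hrho, hrho] at this
      push_cast at this
      have : ((a:↥G):X) = ((b:↥G):X) := by
        have h1 := mul_right_cancel this
        have h2 := mul_left_cancel h1
        exact mul_right_cancel h2
      exact Subtype.coe_injective (Subtype.coe_injective this)
    -- compute the action on each basis vector
    have hact : ∀ v : {w : ↥G // rho t₀ w = w},
        tact (((v:↥G):X) * (t₀:X)) ((u:X) * (s:X)) = ((φ v : ↥G) : X) * (t₀:X) := by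
      intro v
      rw [htact (v:↥G) u t₀ s, hsemi]
      have hconj : ((s⁻¹ : ↥M) : X) * (t₀:X) * ((s⁻¹ : ↥M) : X)⁻¹ = (t₀:X) := by
        push_cast
        rw [inv_inv, mul_assoc, ← hst']
        group
      rw [hconj]
    rw [hm₀, Finsupp.mapDomain_finset_sum]
    simp only [Finsupp.mapDomain_single]
    calc (∑ v : {w : ↥G // rho t₀ w = w},
            Finsupp.single (tact (((v:↥G):X) * (t₀:X)) ((u:X) * (s:X))) (1:k))
        = ∑ v : {w : ↥G // rho t₀ w = w}, Finsupp.single (((φ v : ↥G):X) * (t₀:X)) (1:k) := by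
          exact Finset.sum_congr rfl fun v _ => by rw [hact v]
      _ = ∑ v : {w : ↥G // rho t₀ w = w}, Finsupp.single (((v:↥G):X) * (t₀:X)) (1:k) := by
          exact Fintype.sum_bijective φ hφbij _ _ (fun v => rfl)
end

section
/- Let G be a finite group and X = G ⋊ G the semidirect product in which the second factor acts on the first by conjugation, i.e. (v,t)(u,s) = (v·(tut⁻¹), ts). Identify G with the subgroup {(u,e)} and M = G with the subgroup {(e,s)}; then X = GM is an exact factorization with s▷u = sus⁻¹ and s◁u = s. For t₀ ∈ G, writing cent(t₀) for the centralizer of t₀ in G and C₀^M for the conjugacy class of t₀⁻¹ in G: (i) the X-conjugacy class of (e, t₀⁻¹) equals { (ab⁻¹, b) : a, b ∈ C₀^M }; (ii) ‖·‖⁻¹((e, t₀⁻¹)) = { (v, t₀) : v ∈ cent(t₀) }; (iii) the centralizer of (e, t₀) in X equals { (u, s) : u, s ∈ cent(t₀) }; (iv) for all v, u, s ∈ cent(t₀), (v, t₀) ⋊̃ (u, s) = (s⁻¹vus, t₀). -/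
open SemidirectProduct

private lemma codouble_mulmul {G : Type*} [Group G] (a b c d : G) :
    (inl a * inr b : G ⋊[MulAut.conj] G) * (inl c * inr d) =
    inl (a * (b * c * b⁻¹)) * inr (b * d) := by
  ext <;> simp [MulAut.conj_apply]

private lemma codouble_eq_iff {G : Type*} [Group G] (a b c d : G) :
    (inl a * inr b : G ⋊[MulAut.conj] G) = inl c * inr d ↔ a = c ∧ b = d := by
  constructor
  · intro h
    have h1 := congrArg SemidirectProduct.left h
    have h2 := congrArg SemidirectProduct.right h
    simp only [mul_left, mul_right, left_inl, right_inl, left_inr, right_inr,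
      one_mul, mul_one, map_one, MulAut.one_apply] at h1 h2
    exact ⟨h1, h2⟩
  · rintro ⟨rfl, rfl⟩; rfl

private lemma codouble_inr_eq {G : Type*} [Group G] (s : G) :
    (inr s : G ⋊[MulAut.conj] G) = inl (1 : G) * inr s := by simp

private lemma codouble_inv {G : Type*} [Group G] (a b : G) :
    ((inl a * inr b : G ⋊[MulAut.conj] G))⁻¹ = inl (b⁻¹ * a⁻¹ * b) * inr b⁻¹ := by
  ext <;> simp [MulAut.conj_apply]

/-- **The codouble factorization `X = G ⋊ G` with conjugation action.**
Let `G` be a finite group and `X = G ⋊ G` the semidirect product where the second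
factor acts on the first by conjugation.  Identifying `G` with `{(u,e)}` (via `inl`)
and `M = G` with `{(e,s)}` (via `inr`), `X = GM` is an exact factorization with
`s▷u = sus⁻¹`, `s◁u = s`.  For `t₀ ∈ G`: (i) the `X`-conjugacy class of
`(e,t₀⁻¹)` is `{(ab⁻¹, b) : a, b ∈ C₀^M}` with `C₀^M` the class of `t₀⁻¹` in `G`;
(ii) `‖·‖⁻¹((e,t₀⁻¹)) = {(v,t₀) : v ∈ cent(t₀)}`; (iii) the centralizer of
`(e,t₀)` in `X` is `{(u,s) : u,s ∈ cent(t₀)}`; (iv) for `v,u,s ∈ cent(t₀)`,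
`(v,t₀) ⋊̃ (u,s) = (s⁻¹vus, t₀)`. -/
theorem codouble_factorization_of_finite_group
    {G : Type*} [Group G] [Fintype G]
    (norm : G ⋊[MulAut.conj] G → G ⋊[MulAut.conj] G)
    (hnorm : ∀ v t : G, norm (inl v * inr t) = (inl v)⁻¹ * (inr t)⁻¹ * inl v)
    (tact : G ⋊[MulAut.conj] G → G ⋊[MulAut.conj] G → G ⋊[MulAut.conj] G)
    (htact : ∀ v t u s : G,
      tact (inl v * inr t) (inl u * inr s) =
        inl (s⁻¹ * (v * u) * s) * inr (s⁻¹ * t * s))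
    (t₀ : G) :
    Function.Bijective (fun p : G × G => (inl p.1 : G ⋊[MulAut.conj] G) * inr p.2) ∧
    (∀ s u : G, (inr s : G ⋊[MulAut.conj] G) * inl u = inl (s * u * s⁻¹) * inr s) ∧
    ({x : G ⋊[MulAut.conj] G | IsConj (inr t₀⁻¹) x} =
      {x : G ⋊[MulAut.conj] G | ∃ a b : G,
        IsConj t₀⁻¹ a ∧ IsConj t₀⁻¹ b ∧ x = inl (a * b⁻¹) * inr b}) ∧
    (norm ⁻¹' {inr t₀⁻¹} =
      {x : G ⋊[MulAut.conj] G | ∃ v : G, v * t₀ = t₀ * v ∧ x = inl v * inr t₀}) ∧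
    ((Subgroup.centralizer ({inr t₀} : Set (G ⋊[MulAut.conj] G)) : Set (G ⋊[MulAut.conj] G)) =
      {x : G ⋊[MulAut.conj] G | ∃ u s : G,
        u * t₀ = t₀ * u ∧ s * t₀ = t₀ * s ∧ x = inl u * inr s}) ∧
    (∀ v u s : G, v * t₀ = t₀ * v → u * t₀ = t₀ * u → s * t₀ = t₀ * s →
      tact (inl v * inr t₀) (inl u * inr s) = inl (s⁻¹ * v * u * s) * inr t₀) := by
  have key : ∀ v t : G, ((inl v)⁻¹ * (inr t)⁻¹ * inl v : G ⋊[MulAut.conj] G) =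
      inl (v⁻¹ * (t⁻¹ * v * t)) * inr t⁻¹ := by
    intro v t
    ext <;> simp [MulAut.conj_apply, mul_assoc]
  refine ⟨?_, ?_, ?_, ?_, ?_, ?_⟩
  · refine ⟨fun p q h => ?_, fun x => ⟨(x.left, x.right), inl_left_mul_inr_right x⟩⟩
    have h' := (codouble_eq_iff p.1 p.2 q.1 q.2).mp h
    exact Prod.ext h'.1 h'.2
  · intro s u
    ext <;> simp [MulAut.conj_apply]
  · ext x
    simp only [Set.mem_setOf_eq, isConj_iff]
    constructor
    · rintro ⟨c, rfl⟩
      refine ⟨c.left * (c.right * t₀⁻¹ * c.right⁻¹) * c.left⁻¹,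
        c.right * t₀⁻¹ * c.right⁻¹,
        ⟨c.left * c.right, by group⟩, ⟨c.right, rfl⟩, ?_⟩
      conv_lhs => rw [← inl_left_mul_inr_right c]
      rw [codouble_inv, codouble_inr_eq t₀⁻¹, codouble_mulmul, codouble_mulmul,
        codouble_eq_iff]
      exact ⟨by group, by group⟩
    · rintro ⟨a, b, ⟨w, hw⟩, ⟨t, ht⟩, rfl⟩
      subst hw; subst ht
      refine ⟨inl (w * t⁻¹) * inr t, ?_⟩
      rw [codouble_inv, codouble_inr_eq t₀⁻¹, codouble_mulmul, codouble_mulmul,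
        codouble_eq_iff]
      exact ⟨by group, by group⟩
  · ext x
    simp only [Set.mem_preimage, Set.mem_singleton_iff, Set.mem_setOf_eq]
    constructor
    · intro h
      rw [← inl_left_mul_inr_right x, hnorm, key, codouble_inr_eq t₀⁻¹,
        codouble_eq_iff] at h
      obtain ⟨h1, h2⟩ := h
      have ht : x.right = t₀ := inv_injective h2
      rw [ht] at h1
      have hv : x.left = t₀⁻¹ * x.left * t₀ := inv_mul_eq_one.mp h1
      refine ⟨x.left, ?_, ?_⟩
      · calc x.left * t₀ = t₀ * (t₀⁻¹ * x.left * t₀) * t₀⁻¹ * t₀ := by group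
          _ = t₀ * x.left * t₀⁻¹ * t₀ := by rw [← hv]
          _ = t₀ * x.left := by group
      · conv_lhs => rw [← inl_left_mul_inr_right x]
        rw [ht]
    · rintro ⟨v, hv, rfl⟩
      have h3 : t₀⁻¹ * v * t₀ = v := by
        rw [mul_assoc, hv, ← mul_assoc]; simp
      rw [hnorm, key, h3, inv_mul_cancel]
      simp
  · ext x
    simp only [SetLike.mem_coe, Subgroup.mem_centralizer_iff, Set.mem_singleton_iff,
      Set.mem_setOf_eq, forall_eq]
    constructor
    · intro h
      refine ⟨x.left, x.right, ?_, ?_, (inl_left_mul_inr_right x).symm⟩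
      all_goals
        rw [← inl_left_mul_inr_right x, codouble_inr_eq t₀, codouble_mulmul,
          codouble_mulmul, codouble_eq_iff] at h
      · obtain ⟨h1, _⟩ := h
        have h1' : t₀ * x.left * t₀⁻¹ = x.left := by
          have := h1.symm
          simpa using this.symm
        have : t₀ * x.left = x.left * t₀ := by
          calc t₀ * x.left = t₀ * x.left * t₀⁻¹ * t₀ := by group
            _ = x.left * t₀ := by rw [h1']
        exact this.symm
      · obtain ⟨_, h2⟩ := h
        exact h2.symm
    · rintro ⟨u, s, hu, hs, rfl⟩
      rw [codouble_inr_eq t₀, codouble_mulmul, codouble_mulmul, codouble_eq_iff]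
      constructor
      · have h : t₀ * u * t₀⁻¹ = u := by rw [← hu]; simp [mul_assoc]
        rw [h]; group
      · exact hs.symm
  · intro v u s hv hu hs
    rw [htact, codouble_eq_iff]
    refine ⟨by group, ?_⟩
    rw [mul_assoc, ← hs, ← mul_assoc]; simp
end

section
/- Assume s▷u = u for all s ∈ M, u ∈ G (equivalently su = u(s◁u), so M is normal in X and s◁u = u⁻¹su). Let C ⊆ M be a conjugacy class of M that is G-invariant, i.e. a◁u ∈ C for all a ∈ C, u ∈ G, and for each a ∈ C define f_a = Σ_{v∈G} v·(a⁻¹◁v⁻¹) ∈ k[X]. Then: (i) ‖v·(a⁻¹◁v⁻¹)‖ = a for every v ∈ G, so f_a ∈ J_a = span_k ‖·‖⁻¹(a); (ii) f_a ⋊̃ u = f_{u⁻¹au} (= f_{a◁u}) for all u ∈ G and a ∈ C; (iii) for any t₀ ∈ C, f_{t₀} ⋊̃ x = f_{t₀} for every x in the centralizer of t₀ in X; (iv) the span V = span_k{ f_a : a ∈ C } = ⊕_{a∈C} k·f_a is an irreducible crossed submodule of k[X]. -/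
/-- **Canonical calculus on cross products from `G`-invariant conjugacy classes.**
Assume `s▷u = u` for all `s ∈ M`, `u ∈ G` (so `M` is normal in `X` and
`s◁u = u⁻¹su`).  Let `C ⊆ M` be a `G`-invariant conjugacy class of `M` and for
`a ∈ C` set `f_a = Σ_{v∈G} v·(a⁻¹◁v⁻¹) ∈ k[X]`.  Then (i) `‖v·(a⁻¹◁v⁻¹)‖ = a`
for all `v ∈ G`, so `f_a ∈ J_a`; (ii) `f_a ⋊̃ u = f_{a◁u}` for all `u ∈ G`;
(iii) for `t₀ ∈ C`, `f_{t₀} ⋊̃ x = f_{t₀}` for all `x` in the centralizer of `t₀`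
in `X`; (iv) `V = span_k{f_a : a ∈ C} = ⊕_{a∈C} k·f_a` is an irreducible crossed
submodule of `k[X]`. -/
theorem canonical_calculus_on_cross_products
    {k X : Type*} [Field k] [Group X] [Fintype X] (G M : Subgroup X)
    [Fintype ↥G]
    (hbij : Function.Bijective (fun p : ↥G × ↥M => (p.1 : X) * (p.2 : X)))
    (rho : ↥M → ↥G → ↥G) (sig : ↥M → ↥G → ↥M)
    (hfact : ∀ (s : ↥M) (u : ↥G), (s : X) * (u : X) = (rho s u : X) * (sig s u : X))
    (hsemi : ∀ (s : ↥M) (u : ↥G), rho s u = u)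
    (norm : X → X)
    (hnorm : ∀ (v : ↥G) (t : ↥M), norm ((v : X) * (t : X)) = (v : X)⁻¹ * (t : X)⁻¹ * (v : X))
    (tact : X → X → X)
    (htact : ∀ (v u : ↥G) (t s : ↥M),
      tact ((v : X) * (t : X)) ((u : X) * (s : X)) =
        (rho (sig s⁻¹ (v * u)⁻¹) (v * u) : X) *
          ((sig s⁻¹ (v * u)⁻¹ : X) * (t : X) * (sig s⁻¹ (v * u)⁻¹ : X)⁻¹))
    (C : Set ↥M) (hCclass : ∃ t₁ : ↥M, C = {a : ↥M | IsConj t₁ a})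
    (hCinv : ∀ a ∈ C, ∀ u : ↥G, sig a u ∈ C)
    (f : ↥M → (X →₀ k))
    (hf : ∀ a : ↥M, f a = ∑ v : ↥G,
      Finsupp.single ((v : X) * ((sig a⁻¹ v⁻¹ : ↥M) : X)) (1 : k)) :
    (∀ a ∈ C, ∀ v : ↥G, norm ((v : X) * ((sig a⁻¹ v⁻¹ : ↥M) : X)) = (a : X)) ∧
    (∀ a ∈ C, f a ∈ Jsub k norm ((a : X))) ∧
    (∀ a ∈ C, ∀ u : ↥G,
      Finsupp.mapDomain (fun x => tact x (u : X)) (f a) = f (sig a u)) ∧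
    (∀ t₀ ∈ C, ∀ x ∈ Subgroup.centralizer ({((t₀ : X))} : Set X),
      Finsupp.mapDomain (fun w => tact w x) (f t₀) = f t₀) ∧
    LinearIndependent k (fun a : C => f a) ∧
    IsIrreducibleCrossedSubmodule k norm tact (Submodule.span k (f '' C)) := by
  classical
  have hsig : ∀ (s : ↥M) (u : ↥G), ((sig s u : ↥M) : X) = (u : X)⁻¹ * (s : X) * (u : X) := by
    intro s u
    have h := hfact s u
    rw [hsemi] at h
    rw [mul_assoc, h, inv_mul_cancel_left]
  have hsig1 : ∀ s : ↥M, sig s 1 = s := by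
    intro s; have := hsig s 1; ext; simpa using this
  set T : ↥M → ↥G → X := fun a v => (v : X) * ((sig a⁻¹ v⁻¹ : ↥M) : X) with hTdef
  have hTnorm : ∀ (a : ↥M) (v : ↥G), norm (T a v) = (a : X) := by
    intro a v
    rw [hTdef]; rw [hnorm v (sig a⁻¹ v⁻¹), hsig]; push_cast; group
  have hTinj : ∀ a : ↥M, Function.Injective (T a) := by
    intro a v w h
    have := hbij.injective (a₁ := (v, sig a⁻¹ v⁻¹)) (a₂ := (w, sig a⁻¹ w⁻¹)) h
    exact (Prod.mk.injEq _ _ _ _ ▸ this).1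
  have hfT : ∀ a : ↥M, f a = ∑ v : ↥G, Finsupp.single (T a v) (1 : k) := hf
  have happ1 : ∀ (a : ↥M) (w : ↥G), (f a) (T a w) = 1 := by
    intro a w
    rw [hfT, Finsupp.finset_sum_apply]
    rw [Finset.sum_eq_single w]
    · simp
    · intro v _ hvw
      rw [Finsupp.single_apply, if_neg (fun h => hvw (hTinj a h))]
    · simp
  have happ0 : ∀ (a : ↥M) (x : X), norm x ≠ (a : X) → (f a) x = 0 := by
    intro a x hx
    rw [hfT, Finsupp.finset_sum_apply]
    refine Finset.sum_eq_zero fun v _ => ?_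
    rw [Finsupp.single_apply, if_neg]
    intro h; exact hx (h ▸ hTnorm a v)
  have hdelta : ∀ a b : ↥M, (f b) (T a 1) = if b = a then 1 else 0 := by
    intro a b
    by_cases h : b = a
    · subst h; rw [if_pos rfl, happ1]
    · rw [if_neg h]
      refine happ0 b _ ?_
      rw [hTnorm]
      exact fun hc => h (Subtype.ext hc.symm)
  have hTact : ∀ (a : ↥M) (u : ↥G) (s : ↥M) (v : ↥G),
      tact (T a v) ((u : X) * (s : X)) = T (s⁻¹ * sig a u * s) (v * u) := by
    intro a u s v
    rw [hTdef]
    simp only []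
    rw [htact v u (sig a⁻¹ v⁻¹) s]
    rw [hsemi]
    push_cast
    simp only [hsig]
    push_cast
    simp only [hsig]
    group
  have hmas : ∀ (a : ↥M) (u : ↥G) (s : ↥M),
      Finsupp.mapDomain (fun x => tact x ((u : X) * (s : X))) (f a)
        = f (s⁻¹ * sig a u * s) := by
    intro a u s
    rw [hfT, hfT]
    rw [Finsupp.mapDomain_finset_sum]
    simp only [Finsupp.mapDomain_single]
    rw [← Equiv.sum_comp (Equiv.mulRight u)
      (fun w => Finsupp.single (T (s⁻¹ * sig a u * s) w) (1 : k))]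
    refine Finset.sum_congr rfl fun v _ => ?_
    rw [hTact]
    rfl
  -- f a is supported on norm⁻¹ {a}
  have hJ : ∀ a : ↥M, f a ∈ Jsub k norm ((a : X)) := by
    intro a
    rw [hfT]
    refine Submodule.sum_mem _ fun v _ => Submodule.subset_span ?_
    exact ⟨T a v, by simp [hTnorm a v], rfl⟩
  -- support of elements of Jsub
  have hJsupp : ∀ (z : X) (p : X →₀ k), p ∈ Jsub k norm z → ∀ x : X, norm x ≠ z → p x = 0 := by
    intro z p hp x hx
    have : Jsub k norm z = Finsupp.supported k k (norm ⁻¹' {z}) := by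
      rw [Finsupp.supported_eq_span_single, Jsub]
    rw [this, Finsupp.mem_supported] at hp
    by_contra h0
    exact hx (hp (Finsupp.mem_support_iff.mpr h0))
  obtain ⟨t₁, hC⟩ := hCclass
  have ht₁ : t₁ ∈ C := by rw [hC]; exact IsConj.refl t₁
  have hconjC : ∀ a ∈ C, ∀ s : ↥M, s⁻¹ * a * s ∈ C := by
    intro a ha s
    rw [hC] at ha ⊢
    exact ha.trans (isConj_iff.mpr ⟨s⁻¹, by group⟩)
  have hstep : ∀ a ∈ C, ∀ (u : ↥G) (s : ↥M), s⁻¹ * sig a u * s ∈ C :=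
    fun a ha u s => hconjC _ (hCinv a ha u) s
  set V := Submodule.span k (f '' C) with hVdef
  -- every element of V is combination of the f a with explicit coefficients
  set Cs : Finset ↥M := (Set.toFinite C).toFinset with hCs
  have hCsmem : ∀ a : ↥M, a ∈ Cs ↔ a ∈ C := fun a => Set.Finite.mem_toFinset _
  have hrep : ∀ p ∈ V, p = ∑ a ∈ Cs, (p (T a 1)) • f a := by
    intro p hp
    induction hp using Submodule.span_induction with
    | mem q hq =>
      obtain ⟨b, hb, rfl⟩ := hq
      rw [Finset.sum_congr rfl (fun a _ => by rw [hdelta])]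
      rw [Finset.sum_eq_single b]
      · simp
      · intro a _ hab
        rw [if_neg (Ne.symm hab), zero_smul]
      · intro hb'; exact absurd ((hCsmem b).mpr hb) hb'
    | zero => simp
    | add q r hq hr ihq ihr =>
      conv_lhs => rw [ihq, ihr]
      rw [← Finset.sum_add_distrib]
      refine Finset.sum_congr rfl fun a _ => ?_
      rw [Finsupp.add_apply, add_smul]
    | smul c q hq ihq =>
      conv_lhs => rw [ihq]
      rw [Finset.smul_sum]
      refine Finset.sum_congr rfl fun a _ => ?_
      simp [Finsupp.smul_apply, smul_smul]

  refine ⟨?_, ?_, ?_, ?_, ?_, ?_⟩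
  · exact fun a _ v => hTnorm a v
  · exact fun a _ => hJ a
  · intro a ha u
    have h := hmas a u 1
    simp only [OneMemClass.coe_one, mul_one, inv_one, one_mul] at h
    exact h
  · intro t₀ ht₀ x hx
    obtain ⟨⟨u, s⟩, hy⟩ := hbij.surjective x
    simp only [] at hy
    subst hy
    rw [hmas t₀ u s]
    congr 1
    have h1 : ((t₀ : X)) * ((u : X) * (s : X)) = ((u : X) * (s : X)) * (t₀ : X) :=
      Subgroup.mem_centralizer_iff.mp hx _ (Set.mem_singleton _)
    ext
    push_cast
    rw [hsig]
    have h2 : ((s : X))⁻¹ * (((u : X))⁻¹ * (t₀ : X) * (u : X)) * (s : X)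
        = ((u : X) * (s : X))⁻¹ * ((t₀ : X) * ((u : X) * (s : X))) := by group
    rw [h2, h1, inv_mul_cancel_left]
  · rw [linearIndependent_iff']
    intro s g hg i hi
    have h := DFunLike.congr_fun hg (T (i : ↥M) 1)
    rw [Finsupp.finset_sum_apply] at h
    simp only [Finsupp.smul_apply, hdelta, smul_eq_mul, Finsupp.zero_apply] at h
    rw [Finset.sum_eq_single i
      (fun j _ hji => by rw [if_neg (fun hc => hji (Subtype.ext hc)), mul_zero])
      (fun hc => absurd hi hc)] at h
    simpa using h
  · have hVstable : ∀ y : X, V.map (linTact k tact y) ≤ V := by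
      intro y
      obtain ⟨⟨u, s⟩, hy⟩ := hbij.surjective y
      simp only [] at hy
      subst hy
      rw [hVdef, Submodule.map_span]
      refine Submodule.span_le.mpr ?_
      rintro _ ⟨_, ⟨a, ha, rfl⟩, rfl⟩
      have hl : linTact k tact ((u : X) * (s : X)) (f a) = f (s⁻¹ * sig a u * s) := by
        rw [linTact, Finsupp.lmapDomain_apply]; exact hmas a u s
      rw [hl]
      exact Submodule.subset_span ⟨_, hstep a ha u s, rfl⟩
    have hVdecomp : V = ⨆ z ∈ Set.range norm, V ⊓ Jsub k norm z := by
      apply le_antisymm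
      · refine Submodule.span_le.mpr ?_
        rintro _ ⟨a, ha, rfl⟩
        have hmem : f a ∈ V ⊓ Jsub k norm ((a : X)) :=
          ⟨Submodule.subset_span ⟨a, ha, rfl⟩, hJ a⟩
        have hz : (a : X) ∈ Set.range norm := ⟨T a 1, hTnorm a 1⟩
        exact le_iSup₂ (f := fun z (_ : z ∈ Set.range norm) => V ⊓ Jsub k norm z) _ hz hmem
      · exact iSup₂_le fun z _ => inf_le_left
    refine ⟨?_, ⟨hVstable, hVdecomp⟩, ?_⟩
    · refine (Submodule.ne_bot_iff V).mpr ⟨f t₁, Submodule.subset_span ⟨t₁, ht₁, rfl⟩, ?_⟩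
      intro h0
      have h1 := happ1 t₁ 1
      rw [h0] at h1
      simp at h1
    · intro W hW hWV
      by_cases hbot : W = ⊥
      · exact Or.inl hbot
      right
      have hex : ∃ z ∈ Set.range norm, W ⊓ Jsub k norm z ≠ ⊥ := by
        by_contra hcon
        push_neg at hcon
        apply hbot
        rw [hW.2]
        exact le_bot_iff.mp (iSup₂_le fun z hz => (hcon z hz).le)
      obtain ⟨z, hz, hne⟩ := hex
      obtain ⟨p, hp, hp0⟩ := (Submodule.ne_bot_iff _).mp hne
      have hpV : p ∈ V := hWV hp.1
      have hrp := hrep p hpV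
      have hcoef : ∀ a : ↥M, (a : X) ≠ z → p (T a 1) = 0 := fun a haz =>
        hJsupp z p hp.2 (T a 1) (by rw [hTnorm]; exact haz)
      by_cases hcase : ∃ a ∈ Cs, (a : X) = z
      · obtain ⟨a, haCs, haz⟩ := hcase
        have hpa : p = (p (T a 1)) • f a := by
          conv_lhs => rw [hrp]
          rw [Finset.sum_eq_single a]
          · intro b _ hba
            rw [hcoef b (fun hc => hba (Subtype.ext (hc.trans haz.symm))), zero_smul]
          · intro hc; exact absurd haCs hc
        have hcne : p (T a 1) ≠ 0 := fun hc => hp0 (by rw [hpa, hc, zero_smul])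
        have hfaW : f a ∈ W := by
          have hfa : f a = (p (T a 1))⁻¹ • p := by
            nth_rewrite 2 [hpa]
            rw [smul_smul, inv_mul_cancel₀ hcne, one_smul]
          rw [hfa]
          exact W.smul_mem _ hp.1
        have haC : a ∈ C := (hCsmem a).mp haCs
        have hVW : V ≤ W := by
          refine Submodule.span_le.mpr ?_
          rintro _ ⟨b, hb, rfl⟩
          have hconj : IsConj a b := by
            rw [hC] at haC hb
            exact haC.symm.trans hb
          obtain ⟨c, hc⟩ := isConj_iff.mp hconj
          have hb' : (c⁻¹)⁻¹ * sig a 1 * c⁻¹ = b := by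
            rw [hsig1, inv_inv]; exact hc
          have hmb := hmas a 1 c⁻¹
          rw [hb'] at hmb
          refine hW.1 (((1 : ↥G) : X) * ((c⁻¹ : ↥M) : X)) ?_
          exact ⟨f a, hfaW, by rw [linTact, Finsupp.lmapDomain_apply]; exact hmb⟩
        exact le_antisymm hWV hVW
      · push_neg at hcase
        exfalso
        apply hp0
        rw [hrp]
        exact Finset.sum_eq_zero fun a ha => by rw [hcoef a (hcase a ha), zero_smul]
end
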